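/- arXiv:1801.09160 — 7 statements merged into one kernel-verified Lean document; each statement's English description precedes it below -/
import Mathlib

section
/- Let q > 1 be an integer and let χ be an odd primitive Dirichlet character with conductor q (odd means χ(−1) = −1). Then the limit as N → ∞ of the partial products ∏_{k=2}^{N} (1 − χ(k)/k) exists and equals (π·2^{φ(q)/2}) / (q·ε(q)) · ∏_{2 ≤ j ≤ ⌊(q−1)/2⌋, gcd(j,q)=1} sin(π·(j − χ(j))/q), where sin is the complex sine function. -/
/-!
Group the terms of the partial product by their residue modulo `q`. Classes not coprime to `q`
contribute `1`; since `χ` is odd, the classes of `a` and `q - a` together contribute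
`∏ₘ (m + b)(m + 1 - b) / ((m + c)(m + 1 - c))` with `b = (a - χ a) / q`, `c = a / q`, which by
Euler's sine product tends to `sin (π b) / sin (π c)`. The class of `1` lacks its term `k = 1`;
paired with that of `q - 1` it gives `(π / q) / sin (π / q)` instead. The denominators combine
through `∏ 2 sin (π a / q) = ε(q)` (product over the coprime `a < q / 2`): its square is
`∏ |1 - ζ| = |Φ_q(1)|` over the primitive `q`-th roots of unity `ζ`, and `Φ_q(1)` is `p` if `q`
is a power of the prime `p` and `1` otherwise. This computes the limit along `N = q n + 1`, and
it extends to all `N` because the factors tend to `1`.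
-/

open Filter Finset

/-- `ε(q) = √p` if `q` is a power of a prime `p`, and `ε(q) = 1` otherwise. -/
noncomputable def eps (q : ℕ) : ℝ :=
  if IsPrimePow q then Real.sqrt q.minFac else 1

open Complex

open scoped Real Topology

lemma Real.sin_pi_mul_div_pos {a q : ℕ} (ha : 0 < a) (haq : a < q) :
    0 < Real.sin (π * a / q) := by
  have hq : (0 : ℝ) < q := by exact_mod_cast ha.trans haq
  apply Real.sin_pos_of_pos_of_lt_pi (by positivity)
  rw [div_lt_iff₀ hq, mul_lt_mul_iff_right₀ Real.pi_pos]
  exact_mod_cast haq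

namespace Complex

lemma mem_integerComplement_of_sin_ne_zero {c : ℂ} (hc : sin (π * c) ≠ 0) :
    c ∈ integerComplement := by
  rintro ⟨n, rfl⟩
  exact hc (by simpa [mul_comm] using sin_int_mul_pi n)

lemma natCast_div_mem_integerComplement {a q : ℕ} (ha : 0 < a) (haq : a < q) :
    (a : ℂ) / q ∈ integerComplement := by
  apply mem_integerComplement_of_sin_ne_zero
  rw [show (π : ℂ) * (a / q) = ((π * a / q : ℝ) : ℂ) by push_cast; ring, ← ofReal_sin]
  exact_mod_cast (Real.sin_pi_mul_div_pos ha haq).ne'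

lemma natCast_add_one_sub_ne_zero {c : ℂ} (hc : c ∈ integerComplement) (m : ℕ) :
    (m : ℂ) + 1 - c ≠ 0 :=
  fun h ↦ hc ⟨m + 1, by push_cast; linear_combination h⟩

lemma one_sub_sq_div_ne_zero {c : ℂ} (hc : c ∈ integerComplement) (m : ℕ) :
    1 - c ^ 2 / ((m : ℂ) + 1) ^ 2 ≠ 0 := by
  simpa [sineTerm, neg_div, ← sub_eq_add_neg] using sineTerm_ne_zero hc m

lemma prod_range_succ_mul_add_mul_sub (z : ℂ) (N : ℕ) :
    ∏ m ∈ range (N + 1), ((m + z) * (m + 1 - z)) =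
      z * (N + 1 - z) * (∏ m ∈ range N, ((m : ℂ) + 1) ^ 2) *
        ∏ m ∈ range N, (1 - z ^ 2 / ((m : ℂ) + 1) ^ 2) := by
  induction N with
  | zero => simp
  | succ N ih =>
    rw [prod_range_succ, ih, prod_range_succ, prod_range_succ]
    push_cast
    field_simp
    ring

theorem tendsto_prod_ratio_sin_div_sin {b c : ℂ} (hc : c ∈ integerComplement) :
    Tendsto (fun N : ℕ ↦ ∏ m ∈ range N, ((m + b) / (m + c) * ((m + 1 - b) / (m + 1 - c))))
      atTop (𝓝 (sin (π * b) / sin (π * c))) := by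
  have hratio : Tendsto (fun N : ℕ ↦ ((N : ℂ) + 1 - b) / (N + 1 - c)) atTop (𝓝 1) := by
    simpa [add_comm, add_sub_assoc] using
      tendsto_add_mul_div_add_mul_atTop_nhds (1 - b) (1 - c) 1 one_ne_zero
  have hlim := ((tendsto_euler_sin_prod b).div (tendsto_euler_sin_prod c)
    (sin_pi_mul_ne_zero hc)).mul hratio
  rw [mul_one] at hlim
  rw [← tendsto_add_atTop_iff_nat 1]
  refine hlim.congr fun N ↦ ?_
  have hK : ∏ m ∈ range N, ((m : ℂ) + 1) ^ 2 ≠ 0 :=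
    prod_ne_zero_iff.2 fun m _ ↦ pow_ne_zero _ (Nat.cast_add_one_ne_zero m)
  have hP : ∏ m ∈ range N, (1 - c ^ 2 / ((m : ℂ) + 1) ^ 2) ≠ 0 :=
    prod_ne_zero_iff.2 fun m _ ↦ one_sub_sq_div_ne_zero hc m
  have hNc := natCast_add_one_sub_ne_zero hc N
  simp only [Pi.div_apply, div_mul_div_comm, prod_div_distrib, prod_range_succ_mul_add_mul_sub]
  generalize ∏ m ∈ range N, (1 - b ^ 2 / ((m : ℂ) + 1) ^ 2) = Pb at *
  generalize ∏ m ∈ range N, (1 - c ^ 2 / ((m : ℂ) + 1) ^ 2) = Pc at *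
  generalize ∏ m ∈ range N, ((m : ℂ) + 1) ^ 2 = K at *
  field_simp

theorem tendsto_prod_ratio_mul_div_sin {c : ℂ} (hc : c ∈ integerComplement) :
    Tendsto (fun N : ℕ ↦ ∏ m ∈ range N, ((m + 1) / (m + 1 + c) * ((m + 1) / (m + 1 - c))))
      atTop (𝓝 (π * c / sin (π * c))) := by
  have hlim := (tendsto_euler_sin_prod' (integerComplement.ne_zero hc)).inv₀
    (div_ne_zero (sin_pi_mul_ne_zero hc) (mul_ne_zero (ofReal_ne_zero.2 Real.pi_ne_zero)
      (integerComplement.ne_zero hc)))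
  rw [inv_div] at hlim
  refine hlim.congr fun N ↦ ?_
  rw [← prod_inv_distrib]
  refine prod_congr rfl fun m _ ↦ ?_
  have h1 : (m : ℂ) + 1 + c ≠ 0 := by
    simpa [add_comm] using integerComplement_add_ne_zero hc (m + 1)
  have h2 := natCast_add_one_sub_ne_zero hc m
  rw [div_mul_div_comm, ← inv_div, sineTerm]
  congr 1
  field_simp
  ring

end Complex

section CoprimeResidues

variable {q : ℕ}

def halfCoprimes (q a : ℕ) : Finset ℕ := (Icc a ((q - 1) / 2)).filter fun j => Nat.gcd j q = 1

@[simp]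
lemma mem_halfCoprimes {a r : ℕ} :
    r ∈ halfCoprimes q a ↔ (a ≤ r ∧ r ≤ (q - 1) / 2) ∧ Nat.gcd r q = 1 := by
  simp [halfCoprimes]

lemma two_mul_ne_of_coprime (hq : 2 < q) {r : ℕ} (hr : Nat.gcd r q = 1) : 2 * r ≠ q := by
  rintro rfl
  rw [Nat.gcd_mul_left_right] at hr
  omega

lemma filter_coprime_Icc_eq_union (hq : 2 < q) {a : ℕ} (ha : 1 ≤ a) :
    (Icc a (q - a)).filter (fun j => Nat.gcd j q = 1) =
      halfCoprimes q a ∪ (halfCoprimes q a).image (q - ·) := by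
  ext r
  simp only [mem_halfCoprimes, mem_union, mem_image, mem_filter, mem_Icc]
  constructor
  · rintro ⟨⟨har, hrq⟩, hr⟩
    by_cases hhalf : r ≤ (q - 1) / 2
    · exact Or.inl ⟨⟨har, hhalf⟩, hr⟩
    · have := two_mul_ne_of_coprime hq hr
      refine Or.inr ⟨q - r, ⟨⟨by omega, by omega⟩, ?_⟩, by omega⟩
      rwa [Nat.gcd_self_sub_left (by omega)]
  · rintro (⟨⟨har, hrq⟩, hr⟩ | ⟨s, ⟨⟨has, hsq⟩, hs⟩, rfl⟩)
    · exact ⟨⟨har, by omega⟩, hr⟩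
    · exact ⟨⟨by omega, by omega⟩, by rwa [Nat.gcd_self_sub_left (by omega)]⟩

lemma injOn_sub_halfCoprimes (a : ℕ) : Set.InjOn (q - ·) (halfCoprimes q a) := by
  intro r hr s hs hrs
  simp only [mem_coe, mem_halfCoprimes] at hr hs hrs
  omega

lemma disjoint_halfCoprimes_image_sub (hq : 2 < q) (a : ℕ) :
    Disjoint (halfCoprimes q a) ((halfCoprimes q a).image (q - ·)) := by
  rw [disjoint_left]
  rintro _ hr hr'
  obtain ⟨s, hs, rfl⟩ := mem_image.1 hr'
  rw [mem_halfCoprimes] at hr hs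
  have := two_mul_ne_of_coprime hq hs.2
  omega

lemma prod_filter_coprime_Icc_eq_prod_halfCoprimes {M : Type*} [CommMonoid M] (hq : 2 < q)
    {a : ℕ} (ha : 1 ≤ a) (u : ℕ → M) :
    ∏ r ∈ (Icc a (q - a)).filter (fun j => Nat.gcd j q = 1), u r =
      ∏ r ∈ halfCoprimes q a, u r * u (q - r) := by
  rw [filter_coprime_Icc_eq_union hq ha, prod_union (disjoint_halfCoprimes_image_sub hq a),
    prod_image (injOn_sub_halfCoprimes a), prod_mul_distrib]

lemma totient_eq_two_mul_card_halfCoprimes (hq : 2 < q) :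
    q.totient = 2 * #(halfCoprimes q 1) := by
  have hfull : (range q).filter q.Coprime = (Icc 1 (q - 1)).filter fun j => Nat.gcd j q = 1 := by
    ext r
    simp only [mem_filter, mem_range, mem_Icc, Nat.coprime_comm (m := q)]
    constructor
    · rintro ⟨hrq, hr⟩
      refine ⟨⟨Nat.pos_of_ne_zero ?_, by omega⟩, hr⟩
      rintro rfl
      simp at hr
      omega
    · rintro ⟨⟨_, hrq⟩, hr⟩
      exact ⟨by omega, hr⟩
  rw [Nat.totient_eq_card_coprime, hfull, filter_coprime_Icc_eq_union hq le_rfl,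
    card_union_of_disjoint (disjoint_halfCoprimes_image_sub hq 1),
    card_image_of_injOn (injOn_sub_halfCoprimes 1)]
  ring

lemma halfCoprimes_one_eq_insert (hq : 2 < q) :
    halfCoprimes q 1 = insert 1 (halfCoprimes q 2) := by
  ext r
  rcases eq_or_ne r 1 with rfl | hr
  · simp
    omega
  · simp [hr]
    omega

end CoprimeResidues

section Cyclotomic

open Polynomial

variable {q : ℕ}

lemma eps_eq_sqrt_norm_eval_one_cyclotomic (hq : 1 < q) :
    eps q = √‖(cyclotomic q ℂ).eval 1‖ := by
  unfold eps
  split_ifs with hpp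
  · obtain ⟨p, k, hp, hk, rfl⟩ := (isPrimePow_nat_iff _).1 hpp
    have : Fact p.Prime := ⟨hp⟩
    obtain ⟨k, rfl⟩ := Nat.exists_eq_add_of_lt hk
    rw [zero_add, eval_one_cyclotomic_prime_pow, norm_natCast, hp.pow_minFac k.succ_ne_zero]
  · rw [eval_one_cyclotomic_not_prime_pow, norm_one, Real.sqrt_one]
    intro p hp k hpk
    rcases k.eq_zero_or_pos with rfl | hk
    · rw [pow_zero] at hpk
      omega
    · exact hpp ((isPrimePow_nat_iff _).2 ⟨p, k, hp, hk, hpk⟩)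

lemma IsPrimitiveRoot.primitiveRoots_eq_image_pow {R : Type*} [CommRing R] [IsDomain R]
    [DecidableEq R] {ζ : R} (hζ : IsPrimitiveRoot ζ q) (hq : 1 < q) :
    primitiveRoots q R = ((Icc 1 (q - 1)).filter fun j => Nat.gcd j q = 1).image (ζ ^ ·) := by
  have : NeZero q := ⟨by omega⟩
  ext μ
  simp only [mem_primitiveRoots (by omega : 0 < q), mem_image, mem_filter, mem_Icc]
  constructor
  · intro hμ
    obtain ⟨i, hiq, rfl⟩ := hζ.eq_pow_of_pow_eq_one hμ.pow_eq_one
    have hi : Nat.gcd i q = 1 := (hζ.pow_iff_coprime (by omega) i).1 hμ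
    refine ⟨i, ⟨⟨Nat.pos_of_ne_zero ?_, by omega⟩, hi⟩, rfl⟩
    rintro rfl
    simp at hi
    omega
  · rintro ⟨i, ⟨-, hi⟩, rfl⟩
    exact hζ.pow_of_coprime i hi

lemma norm_eval_one_cyclotomic (hq : 1 < q) :
    ‖(cyclotomic q ℂ).eval 1‖ =
      ∏ a ∈ (Icc 1 (q - 1)).filter (fun j => Nat.gcd j q = 1), 2 * Real.sin (π * a / q) := by
  set ζ := exp (2 * π * I / q)
  have hζ : IsPrimitiveRoot ζ q := isPrimitiveRoot_exp q (by omega)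
  have hinj : Set.InjOn (ζ ^ ·) ((Icc 1 (q - 1)).filter fun j => Nat.gcd j q = 1) := by
    intro i hi j hj hij
    simp only [coe_filter, mem_Icc, Set.mem_ofPred_eq] at hi hj
    exact hζ.pow_inj (by omega) (by omega) hij
  rw [cyclotomic_eq_prod_X_sub_primitiveRoots hζ, eval_prod, norm_prod,
    hζ.primitiveRoots_eq_image_pow hq, prod_image hinj]
  refine prod_congr rfl fun a ha ↦ ?_
  simp only [mem_filter, mem_Icc] at ha
  have hexp : ζ ^ a = exp (I * ↑(2 * π * a / q)) := by
    rw [← exp_nat_mul]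
    push_cast
    ring_nf
  rw [eval_sub, eval_X, eval_C, norm_sub_rev, hexp, norm_exp_I_mul_ofReal_sub_one,
    show 2 * π * a / q / 2 = π * a / q by ring, Real.norm_eq_abs,
    abs_of_pos (mul_pos two_pos (Real.sin_pi_mul_div_pos (by omega) (by omega)))]

lemma prod_halfCoprimes_two_mul_sin (hq : 2 < q) :
    ∏ a ∈ halfCoprimes q 1, 2 * Real.sin (π * a / q) = eps q := by
  have hpos : 0 ≤ ∏ a ∈ halfCoprimes q 1, 2 * Real.sin (π * a / q) := by
    refine prod_nonneg fun a ha ↦ ?_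
    rw [mem_halfCoprimes] at ha
    have := Real.sin_pi_mul_div_pos (q := q) (a := a) (by omega) (by omega)
    positivity
  rw [eps_eq_sqrt_norm_eval_one_cyclotomic (by omega), norm_eval_one_cyclotomic (by omega),
    prod_filter_coprime_Icc_eq_prod_halfCoprimes hq le_rfl, ← Real.sqrt_sq hpos, ← prod_pow]
  congr 1
  refine prod_congr rfl fun a ha ↦ ?_
  rw [mem_halfCoprimes] at ha
  rw [Nat.cast_sub (by omega), show π * (q - a : ℝ) / q = π - π * a / q by field_simp,
    Real.sin_pi_sub, sq]

end Cyclotomic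

section PartialProducts

variable {M : Type*} [CommMonoid M]

lemma prod_Ico_add_mul_eq_prod_prod (f : ℕ → M) (a q N : ℕ) :
    ∏ k ∈ Ico a (a + q * N), f k = ∏ r ∈ Ico a (a + q), ∏ m ∈ range N, f (q * m + r) := by
  induction N with
  | zero => simp
  | succ N ih =>
    rw [mul_add_one, ← add_assoc,
      ← prod_Ico_consecutive f (Nat.le_add_right a (q * N)) (Nat.le_add_right _ q), ih,
      add_right_comm, ← prod_Ico_add' f a (a + q) (q * N)]
    simp only [prod_range_succ, prod_mul_distrib, add_comm _ (q * N)]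

lemma Filter.tendsto_of_forall_tendsto_mul_add {α : Type*} {u : ℕ → α} {l : Filter α} {q : ℕ}
    (hq : 0 < q) (h : ∀ r < q, Tendsto (fun N ↦ u (q * N + r)) atTop l) :
    Tendsto u atTop l := by
  intro U hU
  have hall : ∀ᶠ N in atTop, ∀ r ∈ range q, u (q * N + r) ∈ U :=
    (eventually_all_finset _).2 fun r hr ↦ h r (mem_range.1 hr) hU
  obtain ⟨N₀, hN₀⟩ := eventually_atTop.1 hall
  rw [mem_map]
  filter_upwards [eventually_ge_atTop (q * N₀)] with n hn
  have := hN₀ (n / q) ((Nat.le_div_iff_mul_le hq).2 (by linarith)) (n % q)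
    (mem_range.2 (Nat.mod_lt n hq))
  rwa [Nat.div_add_mod] at this

lemma tendsto_prod_Icc_of_tendsto_mul_add [TopologicalSpace M] [ContinuousMul M] {f : ℕ → M}
    (hf : Tendsto f atTop (𝓝 1)) {q : ℕ} (hq : 0 < q) (a s : ℕ) {L : M}
    (h : Tendsto (fun N ↦ ∏ k ∈ Icc a (q * N + s), f k) atTop (𝓝 L)) :
    Tendsto (fun n ↦ ∏ k ∈ Icc a n, f k) atTop (𝓝 L) := by
  rw [← tendsto_add_atTop_iff_nat s]
  refine tendsto_of_forall_tendsto_mul_add hq fun r hr ↦ ?_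
  induction r with
  | zero => simpa [add_comm] using h
  | succ r ih =>
    have hshift : Tendsto (fun N ↦ q * N + r + s + 1) atTop atTop :=
      tendsto_atTop_mono (fun N ↦ show N ≤ q * N + r + s + 1 by nlinarith) tendsto_id
    have := (ih (by omega)).mul (hf.comp hshift)
    rw [mul_one] at this
    refine this.congr' ?_
    filter_upwards [eventually_ge_atTop a] with N hN
    rw [Function.comp_apply, ← prod_Icc_succ_top (by nlinarith)]
    ring_nf

end PartialProducts

lemma DirichletCharacter.Odd.two_lt {S : Type*} [CommRing S] [NeZero (2 : S)] {q : ℕ}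
    {χ : DirichletCharacter S q} (hχ : χ.Odd) (hq : q ≠ 0) : 2 < q := by
  by_contra! h
  have hneg : (-1 : ZMod q) = 1 := by
    obtain rfl | rfl : q = 1 ∨ q = 2 := by omega
    all_goals decide
  have h2 : (2 : S) = 0 := by
    have := hχ
    rw [DirichletCharacter.Odd, hneg, map_one] at this
    linear_combination this
  exact NeZero.ne (2 : S) h2

namespace DirichletCharacter

variable {q : ℕ} (χ : DirichletCharacter ℂ q)

lemma tendsto_one_sub_div_natCast : Tendsto (fun k : ℕ ↦ 1 - χ k / k) atTop (𝓝 1) := by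
  have h : Tendsto (fun k : ℕ ↦ χ k / k) atTop (𝓝 0) := by
    refine squeeze_zero_norm (fun k ↦ ?_) tendsto_one_div_atTop_nhds_zero_nat
    rw [norm_div, norm_natCast]
    gcongr
    exact χ.norm_le_one _
  simpa using tendsto_const_nhds.sub h

noncomputable def classPartialProd (x N : ℕ) : ℂ :=
  ∏ m ∈ range N, (1 - χ ((q * m + x : ℕ) : ZMod q) / ((q * m + x : ℕ) : ℂ))

lemma classPartialProd_eq_one {x : ℕ} (hx : Nat.gcd x q ≠ 1) (N : ℕ) :
    χ.classPartialProd x N = 1 := by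
  refine prod_eq_one fun m _ ↦ ?_
  have hunit : ¬IsUnit ((q * m + x : ℕ) : ZMod q) := by
    simpa [ZMod.isUnit_iff_coprime] using hx
  rw [MulChar.map_nonunit χ hunit, zero_div, sub_zero]

lemma classPartialProd_eq [NeZero q] {x : ℕ} (hx : 0 < x) (N : ℕ) :
    χ.classPartialProd x N = ∏ m ∈ range N, ((m + (x - χ x) / q) / (m + x / q)) := by
  refine prod_congr rfl fun m _ ↦ ?_
  have hq : (q : ℂ) ≠ 0 := NeZero.ne _
  have hqmx : (q : ℂ) * m + x ≠ 0 := by exact_mod_cast (by omega : q * m + x ≠ 0)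
  simp only [Nat.cast_add, Nat.cast_mul, ZMod.natCast_self, zero_mul, zero_add]
  field_simp
  ring

lemma tendsto_classPartialProd_mul_sub (hχ : χ.Odd) {a : ℕ} (ha : 0 < a) (haq : a < q) :
    Tendsto (fun N ↦ χ.classPartialProd a N * χ.classPartialProd (q - a) N) atTop
      (𝓝 (sin (π * ((a - χ a) / q)) / sin (π * (a / q)))) := by
  have : NeZero q := ⟨by omega⟩
  have hq : (q : ℂ) ≠ 0 := NeZero.ne _
  have hχa : χ ((q - a : ℕ) : ZMod q) = -χ a := by
    rw [Nat.cast_sub haq.le, ZMod.natCast_self, zero_sub, hχ.eval_neg]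
  refine (tendsto_prod_ratio_sin_div_sin (natCast_div_mem_integerComplement ha haq)).congr
    fun N ↦ ?_
  rw [classPartialProd_eq χ ha, classPartialProd_eq χ (by omega), ← prod_mul_distrib]
  refine prod_congr rfl fun m _ ↦ ?_
  rw [hχa, Nat.cast_sub haq.le]
  congr 2 <;> field_simp <;> ring

lemma tendsto_classPartialProd_add_one_mul_sub_one (hχ : χ.Odd) (hq : 1 < q) :
    Tendsto (fun N ↦ χ.classPartialProd (q + 1) N * χ.classPartialProd (q - 1) N) atTop
      (𝓝 (π * (1 / q) / sin (π * (1 / q)))) := by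
  have : NeZero q := ⟨by omega⟩
  have hq0 : (q : ℂ) ≠ 0 := NeZero.ne _
  have hχ1 : χ ((q + 1 : ℕ) : ZMod q) = 1 := by
    rw [Nat.cast_add, ZMod.natCast_self, zero_add, Nat.cast_one, map_one]
  have hχ1' : χ ((q - 1 : ℕ) : ZMod q) = -1 := by
    rw [Nat.cast_sub hq.le, ZMod.natCast_self, zero_sub, Nat.cast_one]
    exact hχ
  have hc : (1 : ℂ) / q ∈ integerComplement := by
    simpa using natCast_div_mem_integerComplement one_pos hq
  refine (tendsto_prod_ratio_mul_div_sin hc).congr fun N ↦ ?_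
  rw [classPartialProd_eq χ (by omega), classPartialProd_eq χ (by omega), ← prod_mul_distrib]
  refine prod_congr rfl fun m _ ↦ ?_
  rw [hχ1, hχ1', Nat.cast_sub hq.le]
  push_cast
  congr 2 <;> field_simp <;> ring

/-- The residues are represented by `2, …, q + 1`, so the class of `1` starts at `k = q + 1`. -/
lemma prod_Icc_mul_add_one_eq (hq : 2 < q) (N : ℕ) :
    ∏ k ∈ Icc 2 (q * N + 1), (1 - χ k / k) =
      χ.classPartialProd (q + 1) N * χ.classPartialProd (q - 1) N *
        ∏ r ∈ halfCoprimes q 2, χ.classPartialProd r N * χ.classPartialProd (q - r) N := by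
  have hres : Ico 2 (2 + q) = insert (q + 1) (insert q (insert (q - 1) (Icc 2 (q - 2)))) := by
    ext r
    simp only [mem_Ico, mem_insert, mem_Icc]
    omega
  have hq1 : q + 1 ∉ insert q (insert (q - 1) (Icc 2 (q - 2))) := by simp; omega
  have hq0 : q ∉ insert (q - 1) (Icc 2 (q - 2)) := by simp; omega
  have hq2 : q - 1 ∉ Icc 2 (q - 2) := by simp; omega
  have hsupp : ∀ r ∈ Icc 2 (q - 2), χ.classPartialProd r N ≠ 1 → Nat.gcd r q = 1 :=
    fun r _ h ↦ by_contra fun hr ↦ h (χ.classPartialProd_eq_one hr N)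
  rw [← Ico_add_one_right_eq_Icc, show q * N + 1 + 1 = 2 + q * N by ring,
    prod_Ico_add_mul_eq_prod_prod]
  change ∏ r ∈ Ico 2 (2 + q), χ.classPartialProd r N = _
  rw [hres, prod_insert hq1, prod_insert hq0, prod_insert hq2,
    χ.classPartialProd_eq_one (x := q) (by simp; omega), ← prod_filter_of_ne hsupp,
    prod_filter_coprime_Icc_eq_prod_halfCoprimes hq (by norm_num)]
  ring

lemma tendsto_prod_Icc_mul_add_one (hχ : χ.Odd) (hq : 2 < q) :
    Tendsto (fun N ↦ ∏ k ∈ Icc 2 (q * N + 1), (1 - χ k / k)) atTop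
      (𝓝 (π * (1 / q) / sin (π * (1 / q)) *
        ∏ r ∈ halfCoprimes q 2, sin (π * ((r - χ r) / q)) / sin (π * (r / q)))) := by
  simp only [χ.prod_Icc_mul_add_one_eq hq]
  refine (χ.tendsto_classPartialProd_add_one_mul_sub_one hχ (by omega)).mul
    (tendsto_finsetProd _ fun r hr ↦ χ.tendsto_classPartialProd_mul_sub hχ ?_ ?_)
  all_goals rw [mem_halfCoprimes] at hr; omega

end DirichletCharacter

lemma pi_div_sin_mul_prod_div_sin_eq {q : ℕ} (hq : 2 < q) (S : ℕ → ℂ) :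
    π * (1 / q) / sin (π * (1 / q)) * ∏ r ∈ halfCoprimes q 2, S r / sin (π * (r / q)) =
      (π : ℂ) * (((2 : ℝ) ^ ((q.totient : ℝ) / 2) : ℝ) : ℂ) / ((q : ℂ) * (eps q : ℂ)) *
        ∏ r ∈ halfCoprimes q 2, S r := by
  have hsin {r : ℕ} (h0 : 0 < r) (hr : r < q) : sin (π * (r / q)) ≠ 0 :=
    sin_pi_mul_ne_zero (natCast_div_mem_integerComplement h0 hr)
  have hsin1 : sin (π * (1 / q)) ≠ 0 := by simpa using hsin one_pos (by omega)
  have hsinprod : ∏ r ∈ halfCoprimes q 2, sin (π * (r / q)) ≠ 0 :=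
    prod_ne_zero_iff.2 fun r hr ↦ by
      rw [mem_halfCoprimes] at hr
      exact hsin (by omega) (by omega)
  have h1 : 1 ∉ halfCoprimes q 2 := by simp
  have heps : (eps q : ℂ) = 2 ^ #(halfCoprimes q 1) *
      (sin (π * (1 / q)) * ∏ r ∈ halfCoprimes q 2, sin (π * (r / q))) := by
    rw [← prod_halfCoprimes_two_mul_sin hq, ofReal_prod, halfCoprimes_one_eq_insert hq,
      prod_insert h1, card_insert_of_notMem h1]
    push_cast
    rw [prod_mul_distrib, prod_const]
    simp only [div_eq_mul_inv, mul_assoc]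
    ring
  have hpow : (2 : ℝ) ^ ((q.totient : ℝ) / 2) = 2 ^ #(halfCoprimes q 1) := by
    rw [totient_eq_two_mul_card_halfCoprimes hq, Nat.cast_mul, Nat.cast_two,
      mul_div_cancel_left₀ _ two_ne_zero, Real.rpow_natCast]
  rw [prod_div_distrib, heps, hpow]
  push_cast
  field_simp

theorem infinite_product_odd_dirichlet_char_at_one_general (q : ℕ) (hq : 1 < q)
    (χ : DirichletCharacter ℂ q) (hodd : χ.Odd) :
    Tendsto (fun N : ℕ => ∏ k ∈ Icc 2 N, (1 - χ (k : ZMod q) / (k : ℂ)))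
      atTop
      (nhds ((Real.pi : ℂ) * (((2 : ℝ) ^ ((q.totient : ℝ) / 2) : ℝ) : ℂ) / ((q : ℂ) * (eps q : ℂ)) *
        ∏ j ∈ (Icc 2 ((q - 1) / 2)).filter fun j => Nat.gcd j q = 1,
          Complex.sin ((Real.pi : ℂ) * (((j : ℂ) - χ (j : ZMod q)) / (q : ℂ))))) := by
  have hq2 : 2 < q := hodd.two_lt (by omega)
  have hsub := χ.tendsto_prod_Icc_mul_add_one hodd hq2
  rw [pi_div_sin_mul_prod_div_sin_eq hq2] at hsub
  exact tendsto_prod_Icc_of_tendsto_mul_add χ.tendsto_one_sub_div_natCast (by omega) 2 1 hsub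

/-- Corollary 1, second identity: for an odd primitive Dirichlet character `χ`
of conductor `q > 1`, `∏_{k≥2} (1 - χ(k)/k)` converges to
`π 2^{φ(q)/2} / (q ε(q)) · ∏_{2 ≤ j ≤ ⌊(q-1)/2⌋, (j,q)=1} sin(π (j - χ(j))/q)`. -/
theorem infinite_product_odd_dirichlet_char_at_one (q : ℕ) (hq : 1 < q)
    (χ : DirichletCharacter ℂ q) (hprim : χ.IsPrimitive) (hodd : χ.Odd) :
    Tendsto (fun N : ℕ => ∏ k ∈ Icc 2 N, (1 - χ (k : ZMod q) / (k : ℂ)))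
      atTop
      (nhds ((Real.pi : ℂ) * (((2 : ℝ) ^ ((q.totient : ℝ) / 2) : ℝ) : ℂ) / ((q : ℂ) * (eps q : ℂ)) *
        ∏ j ∈ (Icc 2 ((q - 1) / 2)).filter fun j => Nat.gcd j q = 1,
          Complex.sin ((Real.pi : ℂ) * (((j : ℂ) - χ (j : ZMod q)) / (q : ℂ))))) :=
  infinite_product_odd_dirichlet_char_at_one_general q hq χ hodd
end

section
/- Let n ≥ 1 be an integer, let a ∈ ℂ, let z_1, …, z_n be complex numbers none of which is a nonpositive integer, and let f : {1, …, n} → ℂ satisfy f(1) + ⋯ + f(n) = 0. Then the infinite product ∏_{k=0}^{∞} ∏_{j=1}^{n} (1 − f(j)·a/(z_j + k)) converges (as the limit of partial products over 0 ≤ k ≤ N) and equals ∏_{j=1}^{n} Γ(z_j)/Γ(z_j − f(j)·a), where Γ is the complex Gamma function and each quotient Γ(z_j)/Γ(z_j − f(j)a) is interpreted as Γ(z_j)·(1/Γ(z_j − f(j)a)) with 1/Γ the entire reciprocal Gamma function. -/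
/-!
Since `1 - c/(s + k) = (s - c + k)/(s + k)`, the partial product over `k ≤ N` of the `j`-th factor
is `N^(-c) · Γ_N(s)/Γ_N(s - c)`, where `Γ_N(s) = N^s N!/∏_{k ≤ N} (s + k)` is Gauss's
approximation of `Γ(s)`, with `s = z_j` and `c = f(j)a`. Because `∑_j f(j) = 0` the powers of `N`
cancel in the product over `j`, and Gauss's limit formula `Γ_N → Γ` gives the limit.
-/

open Filter Finset Topology

namespace Complex

theorem cpow_sum {ι : Type*} {x : ℂ} (hx : x ≠ 0) (f : ι → ℂ) (s : Finset ι) :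
    x ^ (∑ i ∈ s, f i) = ∏ i ∈ s, x ^ f i := by
  induction s using Finset.cons_induction with
  | empty => simp
  | cons i s hi ih => rw [sum_cons, prod_cons, cpow_add _ _ hx, ih]

theorem GammaSeq_neg_nat_eq_zero {m N : ℕ} (hmN : m ≤ N) : GammaSeq (-m) N = 0 := by
  have hzero : ∏ k ∈ range (N + 1), (-(m : ℂ) + k) = 0 :=
    prod_eq_zero (mem_range.2 (Nat.lt_succ_of_le hmN)) (neg_add_cancel _)
  rw [GammaSeq, hzero, div_zero]

/-- At the poles `s = -m` this holds because `Γ_N(-m) = 0` for `N ≥ m` (a division by zero). -/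
theorem tendsto_GammaSeq_inv (s : ℂ) :
    Tendsto (fun N ↦ (GammaSeq s N)⁻¹) atTop (𝓝 (Gamma s)⁻¹) := by
  by_cases hs : ∃ m : ℕ, s = -m
  · obtain ⟨m, rfl⟩ := hs
    rw [Gamma_neg_nat_eq_zero, inv_zero]
    refine tendsto_const_nhds.congr' ?_
    filter_upwards [eventually_ge_atTop m] with N hN
    rw [GammaSeq_neg_nat_eq_zero hN, inv_zero]
  · exact (GammaSeq_tendsto_Gamma s).inv₀ (Gamma_ne_zero fun m hm ↦ hs ⟨m, hm⟩)

theorem prod_range_one_sub_div_eq_GammaSeq (s c : ℂ) (hs : ∀ m : ℕ, s ≠ -m) {N : ℕ}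
    (hN : N ≠ 0) :
    ∏ k ∈ range (N + 1), (1 - c / (s + k)) =
      (N : ℂ) ^ (-c) * (GammaSeq s N * (GammaSeq (s - c) N)⁻¹) := by
  have hsk : ∀ k : ℕ, s + k ≠ 0 := fun k h ↦ hs k (eq_neg_of_add_eq_zero_left h)
  have hfactor : ∀ k ∈ range (N + 1), 1 - c / (s + k) = (s - c + k) / (s + k) := by
    intro k _
    field_simp [hsk k]
    ring
  have hprod : ∏ k ∈ range (N + 1), (s + k) ≠ 0 := prod_ne_zero_iff.2 fun k _ ↦ hsk k
  have hN' : (N : ℂ) ≠ 0 := Nat.cast_ne_zero.2 hN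
  have hpow : (N : ℂ) ^ s = (N : ℂ) ^ (s - c) * (N : ℂ) ^ c := by
    rw [← cpow_add _ _ hN', sub_add_cancel]
  have hpow_c : (N : ℂ) ^ c ≠ 0 := cpow_ne_zero_iff.2 (Or.inl hN')
  have hpow_sc : (N : ℂ) ^ (s - c) ≠ 0 := cpow_ne_zero_iff.2 (Or.inl hN')
  have hfac : (N.factorial : ℂ) ≠ 0 := Nat.cast_ne_zero.2 N.factorial_ne_zero
  rw [prod_congr rfl hfactor, prod_div_distrib, GammaSeq, GammaSeq, inv_div, cpow_neg, hpow]
  field_simp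

end Complex

open Complex in
theorem infinite_product_gamma_quotients_general (n : ℕ) (a : ℂ) (z : ℕ → ℂ)
    (hz : ∀ j ∈ Icc 1 n, ∀ m : ℕ, z j ≠ -(m : ℂ))
    (f : ℕ → ℂ) (hf : ∑ j ∈ Icc 1 n, f j = 0) :
    Tendsto (fun N : ℕ => ∏ k ∈ range (N + 1), ∏ j ∈ Icc 1 n,
        (1 - f j * a / (z j + (k : ℂ))))
      atTop
      (nhds (∏ j ∈ Icc 1 n, Complex.Gamma (z j) * (Complex.Gamma (z j - f j * a))⁻¹)) := by
  have hpartial : ∀ N ≠ 0, ∏ k ∈ range (N + 1), ∏ j ∈ Icc 1 n, (1 - f j * a / (z j + k)) =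
      ∏ j ∈ Icc 1 n, GammaSeq (z j) N * (GammaSeq (z j - f j * a) N)⁻¹ := by
    intro N hN
    have hexp : ∑ j ∈ Icc 1 n, -(f j * a) = 0 := by rw [sum_neg_distrib, ← sum_mul, hf]; simp
    rw [Finset.prod_comm, prod_congr rfl fun j hj ↦ prod_range_one_sub_div_eq_GammaSeq _ _ (hz j hj) hN,
      prod_mul_distrib, ← cpow_sum (Nat.cast_ne_zero.2 hN), hexp, cpow_zero, one_mul]
  refine (tendsto_finsetProd _ fun j _ ↦
    (GammaSeq_tendsto_Gamma (z j)).mul (tendsto_GammaSeq_inv _)).congr' ?_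
  filter_upwards [eventually_ne_atTop 0] with N hN using (hpartial N hN).symm

/-- Lemma 1: if `f(1) + ⋯ + f(n) = 0` and no `z_j` is a nonpositive integer, then
`∏_{k≥0} ∏_{j=1}^n (1 - f(j) a/(z_j + k))` converges to `∏_{j=1}^n Γ(z_j)/Γ(z_j - f(j)a)`. -/
theorem infinite_product_gamma_quotients (n : ℕ) (hn : 1 ≤ n) (a : ℂ) (z : ℕ → ℂ)
    (hz : ∀ j ∈ Icc 1 n, ∀ m : ℕ, z j ≠ -(m : ℂ))
    (f : ℕ → ℂ) (hf : ∑ j ∈ Icc 1 n, f j = 0) :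
    Tendsto (fun N : ℕ => ∏ k ∈ range (N + 1), ∏ j ∈ Icc 1 n,
        (1 - f j * a / (z j + (k : ℂ))))
      atTop
      (nhds (∏ j ∈ Icc 1 n, Complex.Gamma (z j) * (Complex.Gamma (z j - f j * a))⁻¹)) :=
  infinite_product_gamma_quotients_general n a z hz f hf
end

section
/- For every integer n ≥ 2, the product of Γ(j/n) over all integers j with 1 ≤ j ≤ n−1 and gcd(j,n) = 1 equals (2π)^{φ(n)/2} if n is not a prime power, and equals (1/√p)·(2π)^{φ(n)/2} if n = p^ν for a prime p and an integer ν ≥ 1. -/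
/-!
Pairing `j` with `n - j` and applying the reflection formula `Γ(x) Γ(1 - x) = π / sin (π x)`,
the square of the product is `(2π)^φ(n) / ∏ 2 sin (π j / n)`. Since
`|1 - e^{2πij/n}| = 2 sin (π j / n)`, the denominator is `|Φₙ(1)| = ∏ |1 - ζ|` over the primitive
`n`-th roots of unity `ζ`, and `Φₙ(1)` equals `p` when `n = p^ν` and `1` when `n` is not a prime
power.
-/

open Finset Polynomial Real

theorem Complex.norm_one_sub_exp_ofReal_mul_I {θ : ℝ} (h0 : 0 ≤ θ) (h2π : θ ≤ 2 * π) :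
    ‖1 - Complex.exp (θ * Complex.I)‖ = 2 * Real.sin (θ / 2) := by
  rw [norm_sub_rev, mul_comm, Complex.norm_exp_I_mul_ofReal_sub_one, norm_of_nonneg]
  exact mul_nonneg zero_le_two (sin_nonneg_of_nonneg_of_le_pi (by linarith) (by linarith))

theorem IsPrimitiveRoot.eval_one_cyclotomic_eq_prod_one_sub_pow {K : Type*} [CommRing K]
    [IsDomain K] {μ : K} {n : ℕ} [NeZero n] (hμ : IsPrimitiveRoot μ n) :
    (cyclotomic n K).eval 1 = ∏ j ∈ range n with j.Coprime n, (1 - μ ^ j) := by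
  rw [cyclotomic_eq_prod_X_sub_primitiveRoots hμ, eval_prod]
  simp only [eval_sub, eval_X, eval_C]
  refine (prod_nbij (μ ^ ·) ?_ ?_ ?_ fun _ _ => rfl).symm
  · intro j hj
    exact (mem_primitiveRoots (NeZero.pos n)).2 (hμ.pow_of_coprime j (mem_filter.1 hj).2)
  · intro a ha b hb hab
    exact hμ.pow_inj (mem_range.1 (mem_filter.1 ha).1) (mem_range.1 (mem_filter.1 hb).1) hab
  · intro ζ hζ
    rw [mem_coe, mem_primitiveRoots (NeZero.pos n), hμ.isPrimitiveRoot_iff] at hζ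
    obtain ⟨i, hin, hi, rfl⟩ := hζ
    exact ⟨i, mem_filter.2 ⟨mem_range.2 hin, hi⟩, rfl⟩

theorem prod_two_sin_pi_mul_div_coprime {n : ℕ} (hn : n ≠ 0) :
    ∏ j ∈ range n with j.Coprime n, 2 * sin (π * j / n) = (cyclotomic n ℝ).eval 1 := by
  have : NeZero n := ⟨hn⟩
  have hcyc :=
    congrArg norm (Complex.isPrimitiveRoot_exp n hn).eval_one_cyclotomic_eq_prod_one_sub_pow
  rw [← map_cyclotomic n Complex.ofRealHom, eval_one_map, Complex.ofRealHom_eq_coe,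
    Complex.norm_real, norm_of_nonneg (cyclotomic_nonneg n le_rfl), norm_prod] at hcyc
  rw [hcyc]
  refine prod_congr rfl fun j hj => ?_
  have hjn : (j : ℝ) ≤ n := by exact_mod_cast (mem_range.1 (mem_filter.1 hj).1).le
  have hexp : Complex.exp (2 * π * Complex.I / n) ^ j
      = Complex.exp (((2 * π * j / n : ℝ) : ℂ) * Complex.I) := by
    rw [← Complex.exp_nat_mul]; push_cast; ring_nf
  rw [hexp, Complex.norm_one_sub_exp_ofReal_mul_I (by positivity)]
  · ring_nf
  · rw [div_le_iff₀ (by positivity)]; gcongr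

theorem prod_range_coprime_reflect {M : Type*} [CommMonoid M] {n : ℕ} (hn : 1 < n)
    (f : ℕ → M) :
    ∏ j ∈ range n with j.Coprime n, f (n - j) = ∏ j ∈ range n with j.Coprime n, f j := by
  have hbounds : ∀ j ∈ {j ∈ range n | j.Coprime n}, 0 < j ∧ j < n := by
    intro j hj
    obtain ⟨hjn, hj⟩ := mem_filter.1 hj
    refine ⟨Nat.pos_of_ne_zero fun h => ?_, mem_range.1 hjn⟩
    rw [h, Nat.coprime_zero_left] at hj
    omega
  have hmaps :
      ∀ j ∈ {j ∈ range n | j.Coprime n}, n - j ∈ {j ∈ range n | j.Coprime n} := by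
    intro j hj
    have := hbounds j hj
    exact mem_filter.2 ⟨mem_range.2 (by omega),
      (Nat.coprime_self_sub_left this.2.le).2 (mem_filter.1 hj).2⟩
  exact prod_nbij' (n - ·) (n - ·) hmaps hmaps
    (fun j hj => by have := hbounds j hj; omega)
    (fun j hj => by have := hbounds j hj; omega) fun _ _ => rfl

theorem sq_prod_Gamma_div_coprime {n : ℕ} (hn : 1 < n) :
    (∏ j ∈ range n with j.Coprime n, Gamma (j / n)) ^ 2
      = (2 * π) ^ n.totient / (cyclotomic n ℝ).eval 1 := by
  have hcard : #{j ∈ range n | j.Coprime n} = n.totient := by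
    simp only [Nat.totient_eq_card_coprime, Nat.coprime_comm]
  calc (∏ j ∈ range n with j.Coprime n, Gamma (j / n)) ^ 2
      = ∏ j ∈ range n with j.Coprime n, Gamma (j / n) * Gamma (1 - j / n) := by
        rw [sq]
        nth_rewrite 2 [← prod_range_coprime_reflect hn fun j => Gamma (j / n)]
        rw [← prod_mul_distrib]
        refine prod_congr rfl fun j hj => ?_
        have hjn : j ≤ n := (mem_range.1 (mem_filter.1 hj).1).le
        rw [Nat.cast_sub hjn, sub_div, div_self (by positivity)]
    _ = ∏ j ∈ range n with j.Coprime n, (2 * π) / (2 * sin (π * j / n)) := by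
        refine prod_congr rfl fun j _ => ?_
        rw [Gamma_mul_Gamma_one_sub, mul_div_mul_left _ _ two_ne_zero, mul_div_assoc]
    _ = (2 * π) ^ n.totient / (cyclotomic n ℝ).eval 1 := by
        rw [prod_div_distrib, prod_const, hcard, prod_two_sin_pi_mul_div_coprime (by omega)]

theorem prod_Gamma_div_coprime {n : ℕ} (hn : 1 < n) :
    ∏ j ∈ range n with j.Coprime n, Gamma (j / n)
      = 1 / √((cyclotomic n ℝ).eval 1) * (2 * π) ^ ((n.totient : ℝ) / 2) := by
  have hP : 0 ≤ ∏ j ∈ range n with j.Coprime n, Gamma (j / n) :=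
    prod_nonneg fun j _ => Gamma_nonneg_of_nonneg (by positivity)
  rw [← sqrt_sq hP, sq_prod_Gamma_div_coprime hn, sqrt_div' _ (cyclotomic_nonneg n le_rfl),
    sqrt_eq_rpow, ← rpow_natCast, ← rpow_mul (by positivity)]
  ring_nf

theorem filter_Icc_gcd_eq_one_eq_filter_range {n : ℕ} (hn : n ≠ 1) :
    {j ∈ Icc 1 (n - 1) | Nat.gcd j n = 1} = {j ∈ range n | j.Coprime n} := by
  ext j
  simp only [mem_filter, mem_Icc, mem_range, Nat.Coprime]
  constructor
  · rintro ⟨⟨h1, h2⟩, h⟩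
    exact ⟨by omega, h⟩
  · rintro ⟨h1, h⟩
    refine ⟨⟨Nat.pos_of_ne_zero fun h0 => ?_, by omega⟩, h⟩
    rw [h0, Nat.gcd_zero_left] at h
    exact hn h

/-- Lemma 2 (Chamberland–Straub): for `n ≥ 2`,
`∏_{1 ≤ j ≤ n-1, (j,n)=1} Γ(j/n)` equals `(2π)^{φ(n)/2}` if `n` is not a prime power,
and `(1/√p)(2π)^{φ(n)/2}` if `n = p^ν` with `p` prime and `ν ≥ 1`. -/
theorem gamma_product_coprime (n : ℕ) (hn : 2 ≤ n) :
    (¬ IsPrimePow n →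
      ∏ j ∈ (Icc 1 (n - 1)).filter (fun j => Nat.gcd j n = 1),
          Real.Gamma ((j : ℝ) / (n : ℝ))
        = (2 * Real.pi) ^ ((n.totient : ℝ) / 2)) ∧
    (∀ p ν : ℕ, p.Prime → 1 ≤ ν → n = p ^ ν →
      ∏ j ∈ (Icc 1 (n - 1)).filter (fun j => Nat.gcd j n = 1),
          Real.Gamma ((j : ℝ) / (n : ℝ))
        = (1 / Real.sqrt p) * (2 * Real.pi) ^ ((n.totient : ℝ) / 2)) := by
  rw [filter_Icc_gcd_eq_one_eq_filter_range (by omega), prod_Gamma_div_coprime hn]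
  refine ⟨fun hn' => ?_, fun p ν hp hν hpν => ?_⟩
  · rw [eval_one_cyclotomic_not_prime_pow fun {p} hp k hk => ?_, sqrt_one, div_one, one_mul]
    obtain rfl | hk0 := k.eq_zero_or_pos
    · rw [pow_zero] at hk; omega
    · exact hn' ((isPrimePow_nat_iff n).2 ⟨p, k, hp, hk0, hk⟩)
  · have : Fact p.Prime := ⟨hp⟩
    obtain ⟨k, rfl⟩ := Nat.exists_eq_add_of_le' hν
    rw [hpν, eval_one_cyclotomic_prime_pow]
end

section
/- For every integer q ≥ 2, the product of sin(πj/q) over all integers j with 1 ≤ j ≤ ⌊(q−1)/2⌋ and gcd(j,q) = 1 equals ε(q) / 2^{φ(q)/2}. -/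
open Finset

/-!
With `ζ = e^{2πi/q}` one has `|1 - ζ^j| = 2 sin(πj/q)` for `0 ≤ j ≤ q`, so the product of
`2 sin(πj/q)` over the residues `j` prime to `q` is `|Φ_q(1)|`, which is `p` if `q` is a power
of the prime `p` and `1` otherwise, i.e. `ε(q)²`. For `q > 2`, the involution `j ↦ q - j` of
these residues pairs `j < q/2` with `q - j > q/2` and preserves `sin(πj/q)`, so the full product
is the square of the half product, which is nonnegative.
-/

open Real Polynomial

namespace IsPrimitiveRoot

variable {R M : Type*} [CommRing R] [IsDomain R] [CommMonoid M] {ζ : R} {k : ℕ}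

theorem prod_primitiveRoots_eq_prod_pow_coprime (h : IsPrimitiveRoot ζ k) (f : R → M) :
    ∏ μ ∈ primitiveRoots k R, f μ = ∏ i ∈ range k with i.Coprime k, f (ζ ^ i) := by
  rcases k.eq_zero_or_pos with rfl | hk
  · simp
  have : NeZero k := ⟨hk.ne'⟩
  symm
  refine prod_bij (fun i _ ↦ ζ ^ i) ?_ ?_ ?_ (fun _ _ ↦ rfl)
  · intro i hi
    rw [mem_primitiveRoots hk]
    exact h.pow_of_coprime i (mem_filter.1 hi).2
  · intro i hi j hj hij
    exact h.pow_inj (mem_range.1 (mem_filter.1 hi).1) (mem_range.1 (mem_filter.1 hj).1) hij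
  · intro μ hμ
    obtain ⟨i, hik, hi, rfl⟩ := h.isPrimitiveRoot_iff.1 ((mem_primitiveRoots hk).1 hμ)
    exact ⟨i, mem_filter.2 ⟨mem_range.2 hik, hi⟩, rfl⟩

theorem prod_one_sub_pow_coprime (h : IsPrimitiveRoot ζ k) :
    ∏ i ∈ range k with i.Coprime k, (1 - ζ ^ i) = (cyclotomic k R).eval 1 := by
  simp [cyclotomic_eq_prod_X_sub_primitiveRoots h, eval_prod,
    h.prod_primitiveRoots_eq_prod_pow_coprime]

end IsPrimitiveRoot

theorem Polynomial.eval_one_cyclotomic {R : Type*} [CommRing R] {q : ℕ} (hq : q ≠ 1) :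
    (cyclotomic q R).eval 1 = if IsPrimePow q then (q.minFac : R) else 1 := by
  split_ifs with h
  · obtain ⟨p, k, hp, hk, rfl⟩ := h
    have : Fact p.Prime := ⟨hp.nat_prime⟩
    obtain ⟨k, rfl⟩ := Nat.exists_eq_add_of_lt hk
    rw [zero_add, eval_one_cyclotomic_prime_pow, hp.nat_prime.pow_minFac (by omega)]
  · refine eval_one_cyclotomic_not_prime_pow fun {p} hp k hpk ↦ h ⟨p, k, hp.prime, ?_, hpk⟩
    rcases k with _ | k
    · exact absurd hpk.symm (by simpa using hq)
    · omega

theorem eps_nonneg (q : ℕ) : 0 ≤ eps q := by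
  unfold eps
  split_ifs <;> positivity

theorem eps_sq (q : ℕ) : eps q ^ 2 = if IsPrimePow q then (q.minFac : ℝ) else 1 := by
  unfold eps
  split_ifs <;> simp

theorem sin_pi_mul_div_nonneg {j q : ℕ} (hj : j ≤ q) : 0 ≤ sin (π * j / q) := by
  rcases q.eq_zero_or_pos with rfl | hq
  · simp
  apply sin_nonneg_of_nonneg_of_le_pi (by positivity)
  rw [div_le_iff₀ (by positivity)]
  exact mul_le_mul_of_nonneg_left (by exact_mod_cast hj) pi_pos.le

theorem sin_pi_mul_sub_div {j q : ℕ} (hj : j ≤ q) :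
    sin (π * ↑(q - j) / q) = sin (π * j / q) := by
  rcases q.eq_zero_or_pos with rfl | hq
  · simp
  rw [Nat.cast_sub hj, mul_sub, sub_div, mul_div_cancel_right₀ _ (by positivity), sin_pi_sub]

theorem norm_one_sub_exp_pow_eq_two_mul_sin {j q : ℕ} (hj : j ≤ q) :
    ‖1 - Complex.exp (2 * π * Complex.I / q) ^ j‖ = 2 * sin (π * j / q) := by
  have hexp : Complex.exp (2 * π * Complex.I / q) ^ j
      = Complex.exp (Complex.I * ↑(2 * (π * j / q))) := by
    rw [← Complex.exp_nat_mul]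
    congr 1
    push_cast
    ring
  rw [norm_sub_rev, hexp, Complex.norm_exp_I_mul_ofReal_sub_one,
    mul_div_cancel_left₀ _ two_ne_zero, norm_mul, Real.norm_of_nonneg (sin_pi_mul_div_nonneg hj),
    Real.norm_two]

theorem prod_two_mul_sin_coprime {q : ℕ} (hq : 1 < q) :
    ∏ j ∈ range q with j.Coprime q, 2 * sin (π * j / q) = eps q ^ 2 := by
  have hζ := Complex.isPrimitiveRoot_exp q (by omega)
  have hnorm : ∀ j ∈ {j ∈ range q | j.Coprime q},
      2 * sin (π * j / q) = ‖1 - Complex.exp (2 * π * Complex.I / q) ^ j‖ := fun j hj ↦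
    (norm_one_sub_exp_pow_eq_two_mul_sin (mem_range.1 (mem_filter.1 hj).1).le).symm
  rw [prod_congr rfl hnorm, ← norm_prod, hζ.prod_one_sub_pow_coprime,
    eval_one_cyclotomic hq.ne', eps_sq]
  split_ifs <;> simp

theorem prod_sin_coprime {q : ℕ} (hq : 1 < q) :
    ∏ j ∈ range q with j.Coprime q, sin (π * j / q) = eps q ^ 2 / 2 ^ q.totient := by
  have hcard : #{j ∈ range q | j.Coprime q} = q.totient := by
    simp_rw [Nat.totient_eq_card_coprime, Nat.coprime_comm]
  rw [eq_div_iff (by positivity), ← hcard, ← prod_const, ← prod_mul_distrib]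
  simp_rw [mul_comm _ (2 : ℝ)]
  exact prod_two_mul_sin_coprime hq

theorem prod_range_coprime_eq_sq {M : Type*} [CommMonoid M] {q : ℕ} (hq : 2 < q) (f : ℕ → M)
    (hf : ∀ j ≤ q, f (q - j) = f j) :
    ∏ j ∈ range q with j.Coprime q, f j
      = (∏ j ∈ Icc 1 ((q - 1) / 2) with j.Coprime q, f j) ^ 2 := by
  set m := (q - 1) / 2
  -- `0` and `q / 2` are the fixed points of `j ↦ q - j`, and neither is prime to `q`
  have hfixed : ∀ j, j.Coprime q → j ≠ 0 ∧ 2 * j ≠ q := by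
    refine fun j hj ↦ ⟨fun h0 ↦ ?_, fun h2 ↦ ?_⟩
    · subst h0
      rw [Nat.coprime_zero_left] at hj
      omega
    · have := hj.eq_one_of_dvd ⟨2, by omega⟩
      omega
  have hsplit : {j ∈ range q | j.Coprime q}
      = {j ∈ Icc 1 m | j.Coprime q} ∪ {j ∈ Icc (m + 1) (q - 1) | j.Coprime q} := by
    rw [← filter_union]
    ext j
    simp only [mem_filter, mem_union, mem_range, mem_Icc]
    constructor
    · rintro ⟨hjq, hj⟩
      have := hfixed j hj
      exact ⟨by omega, hj⟩
    · rintro ⟨hjq, hj⟩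
      exact ⟨by omega, hj⟩
  have hdisj :
      Disjoint {j ∈ Icc 1 m | j.Coprime q} {j ∈ Icc (m + 1) (q - 1) | j.Coprime q} := by
    refine disjoint_filter_filter (disjoint_left.2 fun j hj hj' ↦ ?_)
    simp only [mem_Icc] at hj hj'
    omega
  have hreflect : ∏ j ∈ Icc (m + 1) (q - 1) with j.Coprime q, f j
      = ∏ j ∈ Icc 1 m with j.Coprime q, f j := by
    refine prod_nbij' (q - ·) (q - ·) ?_ ?_ ?_ ?_ ?_ <;>
      simp only [mem_filter, mem_Icc] <;> intro j ⟨hjI, hj⟩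
    · have := hfixed j hj
      exact ⟨by omega, (Nat.coprime_self_sub_left (by omega)).2 hj⟩
    · have := hfixed j hj
      exact ⟨by omega, (Nat.coprime_self_sub_left (by omega)).2 hj⟩
    · omega
    · omega
    · exact (hf j (by omega)).symm
  rw [hsplit, prod_union hdisj, hreflect, sq]

/-- For `q ≥ 2`, `∏_{1 ≤ j ≤ ⌊(q-1)/2⌋, (j,q)=1} sin(πj/q) = ε(q)/2^{φ(q)/2}`. -/
theorem sin_product_coprime (q : ℕ) (hq : 2 ≤ q) :
    ∏ j ∈ (Icc 1 ((q - 1) / 2)).filter (fun j => Nat.gcd j q = 1),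
        Real.sin (Real.pi * (j : ℝ) / (q : ℝ))
      = eps q / 2 ^ ((q.totient : ℝ) / 2) := by
  rcases hq.eq_or_lt with rfl | hq
  · have heps : eps 2 = √2 := by simp [eps, Nat.prime_two.isPrimePow]
    simp [heps, sqrt_eq_rpow]
  have hsq : ((2 : ℝ) ^ ((q.totient : ℝ) / 2)) ^ 2 = 2 ^ q.totient := by
    rw [← rpow_mul_natCast zero_le_two, Nat.cast_ofNat, div_mul_cancel₀ _ two_ne_zero,
      rpow_natCast]
  have hhalf :=
    prod_range_coprime_eq_sq hq (fun j ↦ sin (π * j / q)) fun j ↦ sin_pi_mul_sub_div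
  rw [prod_sin_coprime (by omega), ← hsq, ← div_pow] at hhalf
  refine (pow_left_inj₀ ?_ (div_nonneg (eps_nonneg q) (by positivity)) two_ne_zero).1 hhalf.symm
  exact prod_nonneg fun j hj ↦ sin_pi_mul_div_nonneg (by simp at hj; omega)
end

section
/- Let q > 1 be an integer and let χ be a primitive nonprincipal Dirichlet character with conductor q. Then the limit as N → ∞ of the partial sums ∑_{k=1}^{N} χ(k)/k exists and equals −(1/q) · ∑_{j=1}^{q−1} χ(j)·ψ(j/q), where ψ(z) = Γ′(z)/Γ(z) is the digamma function. -/
/-!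
Since `χ` is `q`-periodic with `∑_{a mod q} χ a = 0`, the partial sum up to `qN` regroups by
residue classes into `(1/q) ∑_{j=1}^{q} χ(j) (∑_{n<N} 1/(j/q + n) - H_N)`. By the recurrence
`ψ(s+1) = ψ(s) + 1/s`, for `0 < x ≤ 1` the inner bracket equals `ψ(x+N) - ψ(N+1) - ψ(x) - γ`, and
`ψ(x+N) - ψ(N+1) → 0` because `ψ` is increasing on `(0, ∞)` (convexity of `log Γ`), so that
`ψ(x+N) ≤ ψ(N+1) ≤ ψ(x+N+1) = ψ(x+N) + 1/(x+N)`. The other partial sums differ from those at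
multiples of `q` by fewer than `q` terms, each tending to `0`.
-/

open Filter Finset

noncomputable def digamma (z : ℂ) : ℂ := deriv Complex.Gamma z / Complex.Gamma z

open Topology

local notation "γ" => Real.eulerMascheroniConstant

lemma Real.differentiableAt_Gamma_of_pos {x : ℝ} (hx : 0 < x) : DifferentiableAt ℝ Gamma x :=
  differentiableOn_Gamma_Ioi.differentiableAt (Ioi_mem_nhds hx)

lemma Real.differentiableAt_log_Gamma {x : ℝ} (hx : 0 < x) :
    DifferentiableAt ℝ (log ∘ Gamma) x :=
  (differentiableAt_Gamma_of_pos hx).log (Gamma_pos_of_pos hx).ne'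

lemma Real.monotoneOn_deriv_log_Gamma : MonotoneOn (deriv (log ∘ Gamma)) (Set.Ioi 0) :=
  convexOn_log_Gamma.monotoneOn_deriv fun _ hx ↦ differentiableAt_log_Gamma hx

lemma Complex.ne_neg_natCast_of_re_pos {s : ℂ} (hs : 0 < s.re) (m : ℕ) : s ≠ -m := by
  rintro rfl
  simp only [neg_re, natCast_re, Left.neg_pos_iff] at hs
  exact hs.not_ge m.cast_nonneg

lemma Complex.deriv_Gamma_ofReal {x : ℝ} (hx : 0 < x) :
    deriv Gamma (x : ℂ) = deriv Real.Gamma x := by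
  have hC := (differentiableAt_Gamma (x : ℂ)
    (ne_neg_natCast_of_re_pos (by simpa using hx))).hasDerivAt
  have hR := (Real.differentiableAt_Gamma_of_pos hx).hasDerivAt.ofReal_comp
  simp_rw [← Gamma_ofReal] at hR
  exact hC.comp_ofReal.unique hR

lemma Complex.digamma_ofReal {x : ℝ} (hx : 0 < x) :
    Complex.digamma x = (deriv (Real.log ∘ Real.Gamma) x : ℝ) := by
  rw [Function.comp_def, deriv.log (Real.differentiableAt_Gamma_of_pos hx)
    (Real.Gamma_pos_of_pos hx).ne',
    Complex.digamma_def, logDeriv_apply, deriv_Gamma_ofReal hx, Gamma_ofReal, ofReal_div]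

lemma Complex.digamma_add_nat {s : ℂ} (hs : 0 < s.re) (n : ℕ) :
    Complex.digamma (s + n) = Complex.digamma s + ∑ k ∈ range n, (s + k)⁻¹ := by
  induction n with
  | zero => simp
  | succ n ih =>
    rw [Nat.cast_succ, ← add_assoc, digamma_apply_add_one _ (ne_neg_natCast_of_re_pos
      (by simpa using hs.trans_le (le_add_of_nonneg_right n.cast_nonneg))), ih, sum_range_succ,
      add_assoc]

lemma Complex.digamma_nat_add_one (n : ℕ) : Complex.digamma (n + 1) = -γ + harmonic n := by
  rw [add_comm, digamma_add_nat (by simp) n, digamma_one, harmonic]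
  push_cast
  simp_rw [add_comm (1 : ℂ)]

lemma Complex.norm_digamma_sub_le {x y : ℝ} (hx : 0 < x) (hxy : x ≤ y) (hyx : y ≤ x + 1) :
    ‖Complex.digamma y - Complex.digamma x‖ ≤ x⁻¹ := by
  set f := deriv (Real.log ∘ Real.Gamma)
  have hy : 0 < y := hx.trans_le hxy
  have hrec : f (x + 1) = f x + x⁻¹ := by
    have := digamma_apply_add_one x (ne_neg_natCast_of_re_pos (by simpa using hx))
    rw [← ofReal_one, ← ofReal_add, digamma_ofReal hx, digamma_ofReal (by positivity)] at this
    exact_mod_cast this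
  have hmono := Real.monotoneOn_deriv_log_Gamma
  have h1 : f x ≤ f y := hmono hx hy hxy
  have h2 : f y ≤ f (x + 1) := hmono hy (show 0 < x + 1 by linarith) hyx
  rw [digamma_ofReal hx, digamma_ofReal hy, ← ofReal_sub, norm_real, Real.norm_eq_abs,
    abs_of_nonneg (sub_nonneg.mpr h1)]
  linarith

lemma Complex.tendsto_sum_inv_add_sub_harmonic {x : ℝ} (hx0 : 0 < x) (hx1 : x ≤ 1) :
    Tendsto (fun N : ℕ ↦ ∑ n ∈ range N, ((x : ℂ) + n)⁻¹ - harmonic N) atTop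
      (𝓝 (-Complex.digamma x - γ)) := by
  have hdiff : Tendsto (fun N : ℕ ↦ Complex.digamma (x + N) - Complex.digamma (N + 1)) atTop
      (𝓝 0) := by
    refine squeeze_zero_norm (a := fun N : ℕ ↦ (x + N)⁻¹) (fun N ↦ ?_) ?_
    · have := norm_digamma_sub_le (x := x + N) (y := N + 1) (by positivity) (by linarith)
        (by linarith)
      rwa [norm_sub_rev, ofReal_add, ofReal_add, ofReal_natCast, ofReal_one] at this
    · exact tendsto_inv_atTop_zero.comp
        (tendsto_atTop_add_const_left atTop x tendsto_natCast_atTop_atTop)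
  have hsum (N : ℕ) : ∑ n ∈ range N, ((x : ℂ) + n)⁻¹ - harmonic N =
      Complex.digamma (x + N) - Complex.digamma (N + 1) - (Complex.digamma x + γ) := by
    rw [digamma_add_nat (by simpa using hx0), digamma_nat_add_one]
    ring
  simp_rw [hsum]
  convert hdiff.sub_const (Complex.digamma x + γ) using 2
  ring

lemma Finset.sum_range_mul_eq_sum_sum {M : Type*} [AddCommMonoid M] (g : ℕ → M) (q N : ℕ) :
    ∑ k ∈ range (q * N), g k = ∑ j ∈ range q, ∑ n ∈ range N, g (q * n + j) := by
  induction N with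
  | zero => simp
  | succ N ih => simp only [Nat.mul_succ, sum_range_add, ih, sum_range_succ, sum_add_distrib]

lemma Finset.sum_Icc_one_eq_sum_range {M : Type*} [AddCommMonoid M] (g : ℕ → M) (N : ℕ) :
    ∑ k ∈ Icc 1 N, g k = ∑ k ∈ range N, g (k + 1) := by
  rw [range_eq_Ico, sum_Ico_add', zero_add, Ico_add_one_right_eq_Icc]

lemma tendsto_sum_range_of_tendsto_sum_range_mul {E : Type*} [SeminormedAddCommGroup E]
    {f : ℕ → E} {q : ℕ} (hq : 0 < q) {L : E} (hf : Tendsto f atTop (𝓝 0))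
    (hL : Tendsto (fun N ↦ ∑ k ∈ range (q * N), f k) atTop (𝓝 L)) :
    Tendsto (fun N ↦ ∑ k ∈ range N, f k) atTop (𝓝 L) := by
  have hdiv : Tendsto (· / q) atTop atTop := Nat.tendsto_div_const_atTop hq.ne'
  have hblock : Tendsto (fun N ↦ q * (N / q)) atTop atTop :=
    tendsto_atTop_mono (fun N ↦ Nat.le_mul_of_pos_left _ hq) hdiv
  have hrem : Tendsto (fun N ↦ ∑ i ∈ range (N % q), f (q * (N / q) + i)) atTop (𝓝 0) := by
    refine squeeze_zero_norm (a := fun N ↦ ∑ i ∈ range q, ‖f (q * (N / q) + i)‖)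
      (fun N ↦ (norm_sum_le _ _).trans (sum_le_sum_of_subset_of_nonneg
        (range_subset_range.mpr (Nat.mod_lt N hq).le) fun _ _ _ ↦ norm_nonneg _)) ?_
    simpa using tendsto_finsetSum (range q) fun i _ ↦
      hf.norm.comp (tendsto_atTop_mono (fun N ↦ Nat.le_add_right _ i) hblock)
  refine ((hL.comp hdiv).add hrem).congr (fun N ↦ ?_) |>.mono_right (by rw [add_zero])
  conv_rhs => rw [← Nat.div_add_mod N q, sum_range_add]
  rfl

lemma ZMod.sum_range_natCast {M : Type*} [AddCommMonoid M] {q : ℕ} [NeZero q]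
    (g : ZMod q → M) : ∑ j ∈ range q, g j = ∑ x, g x :=
  sum_nbij' (fun j ↦ (j : ZMod q)) (fun x ↦ x.val) (fun _ _ ↦ mem_univ _)
    (fun x _ ↦ mem_range.mpr x.val_lt) (fun _ hj ↦ val_natCast_of_lt (mem_range.mp hj))
    (fun x _ ↦ natCast_zmod_val x) fun _ _ ↦ rfl

section

variable {q : ℕ} [NeZero q] (Φ : ZMod q → ℂ)

lemma sum_range_mul_div_natCast_eq (N : ℕ) :
    ∑ k ∈ range (q * N), Φ (k + 1 : ℕ) / (k + 1 : ℕ) =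
      (q : ℂ)⁻¹ * ∑ j ∈ range q, Φ (j + 1 : ℕ) * ∑ n ∈ range N, (((j : ℂ) + 1) / q + n)⁻¹ := by
  have hq : (q : ℂ) ≠ 0 := Nat.cast_ne_zero.mpr (NeZero.ne q)
  rw [sum_range_mul_eq_sum_sum, mul_sum]
  refine sum_congr rfl fun j _ ↦ ?_
  rw [mul_sum, mul_sum]
  refine sum_congr rfl fun n _ ↦ ?_
  have hper : ((q * n + j + 1 : ℕ) : ZMod q) = (j + 1 : ℕ) := by simp
  rw [hper]
  field_simp
  push_cast
  ring

theorem tendsto_sum_Icc_div_natCast_of_sum_eq_zero (hΦ : ∑ x, Φ x = 0) :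
    Tendsto (fun N : ℕ ↦ ∑ k ∈ Icc 1 N, Φ k / k) atTop
      (𝓝 (-(1 / (q : ℂ)) * ∑ j ∈ Icc 1 q, Φ j * digamma ((j : ℂ) / q))) := by
  have hq : 0 < q := Nat.pos_of_neZero q
  have hshift : ∑ j ∈ range q, Φ (j + 1 : ℕ) = 0 := by
    rw [← hΦ, ← Equiv.sum_comp (Equiv.addRight 1), ← ZMod.sum_range_natCast]
    simp
  have hterm : Tendsto (fun k : ℕ ↦ Φ (k + 1 : ℕ) / (k + 1 : ℕ)) atTop (𝓝 0) := by
    obtain ⟨C, hC⟩ := Finite.exists_le fun x ↦ ‖Φ x‖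
    refine squeeze_zero_norm (a := fun k : ℕ ↦ C / (k + 1 : ℕ)) (fun k ↦ ?_)
      ((tendsto_const_div_atTop_nhds_zero_nat C).comp (tendsto_add_atTop_nat 1))
    rw [norm_div, Complex.norm_natCast]
    exact div_le_div_of_nonneg_right (hC _) (Nat.cast_nonneg _)
  have hmul : Tendsto (fun N ↦ ∑ k ∈ range (q * N), Φ (k + 1 : ℕ) / (k + 1 : ℕ)) atTop
      (𝓝 ((q : ℂ)⁻¹ * ∑ j ∈ range q,
        Φ (j + 1 : ℕ) * (-digamma (((j : ℂ) + 1) / q) - γ))) := by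
    have hlim (j : ℕ) (hj : j ∈ range q) := Complex.tendsto_sum_inv_add_sub_harmonic
      (x := (j + 1) / q) (by positivity)
      (div_le_one_of_le₀ (by exact_mod_cast mem_range.mp hj) (Nat.cast_nonneg q))
    push_cast at hlim
    refine ((tendsto_finsetSum _ fun j hj ↦ (hlim j hj).const_mul (Φ (j + 1 : ℕ))).const_mul
      _).congr fun N ↦ ?_
    simp_rw [sum_range_mul_div_natCast_eq, mul_sub, sum_sub_distrib, ← sum_mul, hshift, zero_mul,
      sub_zero]
  simp_rw [sum_Icc_one_eq_sum_range]
  convert tendsto_sum_range_of_tendsto_sum_range_mul hq hterm hmul using 2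
  simp_rw [mul_sub, sum_sub_distrib, ← sum_mul, hshift, zero_mul, sub_zero, mul_neg,
    sum_neg_distrib]
  push_cast
  ring

end

theorem L_one_eq_digamma_sum_general (q : ℕ) (hq : 1 < q)
    (χ : DirichletCharacter ℂ q) (hnp : χ ≠ 1) :
    Tendsto (fun N : ℕ => ∑ k ∈ Icc 1 N, χ (k : ZMod q) / (k : ℂ)) atTop
      (nhds (-(1 / (q : ℂ)) *
        ∑ j ∈ Icc 1 (q - 1), χ (j : ZMod q) * digamma ((j : ℂ) / (q : ℂ)))) := by
  have : NeZero q := ⟨by omega⟩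
  have h := tendsto_sum_Icc_div_natCast_of_sum_eq_zero χ (MulChar.sum_eq_zero_of_ne_one hnp)
  obtain ⟨r, rfl⟩ : ∃ r, q = r + 1 := ⟨q - 1, by omega⟩
  have : Nontrivial (ZMod (r + 1)) := ZMod.nontrivial_iff.mpr (by omega)
  rw [sum_Icc_succ_top (by omega), ZMod.natCast_self, χ.map_zero, zero_mul, add_zero] at h
  rwa [Nat.add_sub_cancel]

/-- Corollary 2, first identity: for a primitive nonprincipal Dirichlet character `χ`
of conductor `q > 1`, `∑_{k≥1} χ(k)/k = -(1/q) ∑_{j=1}^{q-1} χ(j) ψ(j/q)`. -/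
theorem L_one_eq_digamma_sum (q : ℕ) (hq : 1 < q)
    (χ : DirichletCharacter ℂ q) (hprim : χ.IsPrimitive) (hnp : χ ≠ 1) :
    Tendsto (fun N : ℕ => ∑ k ∈ Icc 1 N, χ (k : ZMod q) / (k : ℂ)) atTop
      (nhds (-(1 / (q : ℂ)) *
        ∑ j ∈ Icc 1 (q - 1), χ (j : ZMod q) * digamma ((j : ℂ) / (q : ℂ)))) :=
  L_one_eq_digamma_sum_general q hq χ hnp
end

section
/- Let χ be the nonprincipal Dirichlet character modulo 3 (so χ(k) = 1 if k ≡ 1 (mod 3), χ(k) = −1 if k ≡ 2 (mod 3), χ(k) = 0 if 3 ∣ k). Then for every integer n ≥ 1: L_{2n}(χ) = ((−1)^n/(2n)!)·(π/3)^{2n}, and for every integer n ≥ 0: L_{2n+1}(χ) = ((−1)^n/((2n+1)!·√3))·(π/3)^{2n+1}. -/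
/-!
The partial sums are the Taylor coefficients at `0` of `P_N(x) = ∏_{k ≤ N} (1 + χ(k) x / k)`.
Grouping the factors `k = 3j + 1, 3j + 2` (for `k = 3j + 3` the factor is `1`), Euler's limit
formula for `Γ` and the reflection formula give, for `|x| < 1`,
`∏_j (1 + x/(3j+1))(1 - x/(3j+2)) = Γ(1/3) Γ(2/3) / (Γ((1+x)/3) Γ((2-x)/3))
  = sin(π(1+x)/3) / sin(π/3) = cos(πx/3) + sin(πx/3)/√3`,
uniformly on the unit disc; the at most two factors with `3⌊N/3⌋ < k ≤ N` tend to `1`. So `P_N`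
converges locally uniformly on the disc, and by Weierstrass its Taylor coefficients at `0`
converge to those of `cos(πx/3) + sin(πx/3)/√3`.
-/

open Filter Finset

/-- Partial sum of the multiple L-series:
`∑_{1 ≤ k₁ < k₂ < ⋯ < kₙ ≤ N} (χ(k₁)/k₁)⋯(χ(kₙ)/kₙ)`, encoded as a sum over
`n`-element subsets of `{1, …, N}`. -/
noncomputable def multipleLPartial (χ : ℕ → ℂ) (n N : ℕ) : ℂ :=
  ∑ S ∈ Finset.powersetCard n (Icc 1 N), ∏ k ∈ S, χ k / (k : ℂ)

open Polynomial Complex Topology Metric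
open scoped Real

theorem Polynomial.coeff_prod_one_add_C_mul_X {R ι : Type*} [CommSemiring R] (s : Finset ι)
    (a : ι → R) (n : ℕ) :
    (∏ i ∈ s, (1 + C (a i) * X)).coeff n = ∑ t ∈ s.powersetCard n, ∏ i ∈ t, a i := by
  classical
  simp_rw [add_comm (1 : R[X]), prod_add, prod_const_one, mul_one, prod_mul_distrib, prod_const,
    ← map_prod, finsetSum_coeff, coeff_C_mul_X_pow, powersetCard_eq_filter, sum_filter]
  refine sum_congr rfl fun t _ => ?_
  split_ifs <;> simp_all [eq_comm]

theorem Polynomial.iteratedDeriv_eval {𝕜 : Type*} [NontriviallyNormedField 𝕜] (p : 𝕜[X])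
    (n : ℕ) : iteratedDeriv n (fun x => p.eval x) = fun x => (derivative^[n] p).eval x := by
  induction n generalizing p with
  | zero => rfl
  | succ n ih =>
    have hderiv : deriv (fun x => p.eval x) = fun x => p.derivative.eval x := by
      ext; exact p.deriv
    rw [iteratedDeriv_succ', hderiv, ih, Function.iterate_succ_apply]

theorem Polynomial.iteratedDeriv_eval_zero {𝕜 : Type*} [NontriviallyNormedField 𝕜] (p : 𝕜[X])
    (n : ℕ) : iteratedDeriv n (fun x => p.eval x) 0 = n.factorial * p.coeff n := by
  simp only [iteratedDeriv_eval]
  rw [← coeff_zero_eq_eval_zero, coeff_iterate_derivative, zero_add, Nat.descFactorial_self,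
    nsmul_eq_mul]

section
variable {E : Type*} [NormedAddCommGroup E] [NormedSpace ℂ E] [CompleteSpace E] {U : Set ℂ}

theorem DifferentiableOn.iteratedDeriv {f : ℂ → E} (hf : DifferentiableOn ℂ f U)
    (hU : IsOpen U) (n : ℕ) : DifferentiableOn ℂ (iteratedDeriv n f) U := by
  induction n with
  | zero => simpa using hf
  | succ n ih => simpa only [iteratedDeriv_succ] using ih.deriv hU

theorem TendstoLocallyUniformlyOn.iteratedDeriv {ι : Type*} {φ : Filter ι} {F : ι → ℂ → E}
    {f : ℂ → E} (hf : TendstoLocallyUniformlyOn F f φ U)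
    (hF : ∀ᶠ i in φ, DifferentiableOn ℂ (F i) U) (hU : IsOpen U) (n : ℕ) :
    TendstoLocallyUniformlyOn (fun i => iteratedDeriv n (F i)) (iteratedDeriv n f) φ U := by
  induction n with
  | zero => simpa using hf
  | succ n ih =>
    simpa only [iteratedDeriv_succ, Function.comp_def] using
      ih.deriv (hF.mono fun i hi => hi.iteratedDeriv hU n) hU

end

theorem Complex.prod_range_succ_div_eq_GammaSeq {a b c d : ℂ} (h : a + b = c + d) {m : ℕ}
    (hm : m ≠ 0) :
    ∏ j ∈ range (m + 1), (a + j) * (b + j) / ((c + j) * (d + j)) =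
      GammaSeq c m * GammaSeq d m / (GammaSeq a m * GammaSeq b m) := by
  have hm' : (m : ℂ) ≠ 0 := Nat.cast_ne_zero.mpr hm
  have hpow : (m : ℂ) ^ a * (m : ℂ) ^ b = (m : ℂ) ^ c * (m : ℂ) ^ d := by
    rw [← cpow_add _ _ hm', ← cpow_add _ _ hm', h]
  have hK : (m : ℂ) ^ c * (m : ℂ) ^ d * (m.factorial * m.factorial) ≠ 0 := by
    have : (m.factorial : ℂ) ≠ 0 := Nat.cast_ne_zero.mpr m.factorial_ne_zero
    simp [cpow_eq_zero_iff, hm', this]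
  simp only [GammaSeq, prod_div_distrib, prod_mul_distrib, div_mul_div_comm]
  rw [show (m : ℂ) ^ a * m.factorial * ((m : ℂ) ^ b * m.factorial) =
      (m : ℂ) ^ c * (m : ℂ) ^ d * (m.factorial * m.factorial) by rw [← hpow]; ring,
    show (m : ℂ) ^ c * m.factorial * ((m : ℂ) ^ d * m.factorial) =
      (m : ℂ) ^ c * (m : ℂ) ^ d * (m.factorial * m.factorial) by ring,
    div_div_div_cancel_left' _ _ hK]

theorem Complex.tendsto_prod_range_div_Gamma {a b c d : ℂ} (h : a + b = c + d)
    (hab : Gamma a * Gamma b ≠ 0) :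
    Tendsto (fun m => ∏ j ∈ range m, (a + j) * (b + j) / ((c + j) * (d + j))) atTop
      (𝓝 (Gamma c * Gamma d / (Gamma a * Gamma b))) := by
  rw [← tendsto_add_atTop_iff_nat 1]
  refine (((GammaSeq_tendsto_Gamma c).mul (GammaSeq_tendsto_Gamma d)).div
    ((GammaSeq_tendsto_Gamma a).mul (GammaSeq_tendsto_Gamma b)) hab).congr' ?_
  filter_upwards [eventually_ne_atTop 0] with m hm
  exact (prod_range_succ_div_eq_GammaSeq h hm).symm

noncomputable def pairFactor (j : ℕ) (x : ℂ) : ℂ := (1 + x / (3 * j + 1)) * (1 - x / (3 * j + 2))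

noncomputable def genFunModThree (x : ℂ) : ℂ :=
  cos (π / 3 * x) + sin (π / 3 * x) / (√3 : ℂ)

lemma natCast_three_mul_add_ne_zero (j : ℕ) {r : ℕ} (hr : r ≠ 0) : (3 * j + r : ℂ) ≠ 0 := by
  exact_mod_cast (by omega : 3 * j + r ≠ 0)

lemma pairFactor_eq_div (j : ℕ) (x : ℂ) :
    pairFactor j x = ((1 + x) / 3 + j) * ((2 - x) / 3 + j) / ((1 / 3 + j) * (2 / 3 + j)) := by
  have h1 := natCast_three_mul_add_ne_zero j one_ne_zero
  have h2 := natCast_three_mul_add_ne_zero j two_ne_zero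
  push_cast at h1 h2
  have hden : (1 / 3 + j : ℂ) * (2 / 3 + j) = (3 * j + 1) * (3 * j + 2) / 9 := by ring
  rw [hden, pairFactor]
  field_simp
  ring

lemma sin_div_sin_pi_div_three (x : ℂ) :
    sin (π * ((1 + x) / 3)) / sin (π * (1 / 3)) = genFunModThree x := by
  have hsin : sin (π / 3) = (√3 : ℂ) / 2 := by
    rw [← ofReal_ofNat, ← ofReal_div, ← ofReal_sin, Real.sin_pi_div_three]; push_cast; ring
  have hcos : cos (π / 3) = 1 / 2 := by
    rw [← ofReal_ofNat, ← ofReal_div, ← ofReal_cos, Real.cos_pi_div_three]; push_cast; ring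
  have hs3 : (√3 : ℂ) ≠ 0 := ofReal_ne_zero.mpr (by positivity)
  rw [mul_one_div, show π * ((1 + x) / 3) = π / 3 + π / 3 * x by ring, sin_add, hsin, hcos,
    genFunModThree]
  field_simp

theorem tendsto_prod_pairFactor {x : ℂ} (hx : ‖x‖ < 1) :
    Tendsto (fun m => ∏ j ∈ range m, pairFactor j x) atTop (𝓝 (genFunModThree x)) := by
  have hre : |x.re| < 1 := (abs_re_le_norm x).trans_lt hx
  have ha : 0 < ((1 + x) / 3).re := by
    rw [div_ofNat_re, add_re, one_re]; linarith [neg_abs_le x.re]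
  have hb : 0 < ((2 - x) / 3).re := by
    rw [div_ofNat_re, sub_re, re_ofNat]; linarith [le_abs_self x.re]
  have hΓ := tendsto_prod_range_div_Gamma (c := 1 / 3) (d := 2 / 3) (by ring)
    (mul_ne_zero (Gamma_ne_zero_of_re_pos ha) (Gamma_ne_zero_of_re_pos hb))
  have hlim : Gamma (1 / 3) * Gamma (2 / 3) / (Gamma ((1 + x) / 3) * Gamma ((2 - x) / 3)) =
      genFunModThree x := by
    rw [show (2 - x) / 3 = 1 - (1 + x) / 3 by ring, show (2 : ℂ) / 3 = 1 - 1 / 3 by norm_num,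
      Gamma_mul_Gamma_one_sub, Gamma_mul_Gamma_one_sub,
      div_div_div_cancel_left' _ _ (ofReal_ne_zero.mpr Real.pi_ne_zero), sin_div_sin_pi_div_three]
  rw [← hlim]
  simpa only [pairFactor_eq_div] using hΓ

lemma norm_pairFactor_sub_one_le (j : ℕ) {x : ℂ} (hx : ‖x‖ ≤ 1) :
    ‖pairFactor j x - 1‖ ≤ 2 / ((j : ℝ) + 1) ^ 2 := by
  have h1 := natCast_three_mul_add_ne_zero j one_ne_zero
  have h2 := natCast_three_mul_add_ne_zero j two_ne_zero
  push_cast at h1 h2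
  have hsub : pairFactor j x - 1 = (x - x ^ 2) / ((3 * j + 1) * (3 * j + 2)) := by
    rw [pairFactor]; field_simp; ring
  have hnum : ‖x - x ^ 2‖ ≤ 2 := by
    calc ‖x - x ^ 2‖ ≤ ‖x‖ + ‖x‖ ^ 2 := by rw [← norm_pow]; exact norm_sub_le _ _
      _ ≤ 2 := by nlinarith [norm_nonneg x]
  have hden : ‖((3 * j + 1) * (3 * j + 2) : ℂ)‖ = (3 * j + 1) * (3 * j + 2) := by
    exact_mod_cast Complex.norm_natCast ((3 * j + 1) * (3 * j + 2))
  rw [hsub, norm_div, hden]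
  gcongr; nlinarith [(j.cast_nonneg : (0 : ℝ) ≤ j)]

lemma summable_two_div_add_one_sq : Summable fun j : ℕ => 2 / ((j : ℝ) + 1) ^ 2 := by
  have := (summable_nat_add_iff 1).mpr (Real.summable_one_div_nat_pow.mpr one_lt_two)
  simpa [div_eq_mul_inv] using this.mul_left 2

theorem tendstoUniformlyOn_prod_pairFactor :
    TendstoUniformlyOn (fun m x => ∏ j ∈ range m, pairFactor j x) genFunModThree atTop
      (ball 0 1) := by
  have hprod := Summable.hasProdUniformlyOn_nat_one_add (isCompact_closedBall (0 : ℂ) 1)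
    summable_two_div_add_one_sq
    (Eventually.of_forall fun j x hx => norm_pairFactor_sub_one_le j (by simpa using hx))
    (fun j => by unfold pairFactor; fun_prop)
  simp only [add_sub_cancel] at hprod
  have hball := hprod.tendstoUniformlyOn_finsetRange.mono ball_subset_closedBall
  refine hball.congr_right fun x hx => tendsto_nhds_unique (hball.tendsto_at hx) ?_
  exact tendsto_prod_pairFactor (mem_ball_zero_iff.mp hx)

section
variable {χ : ℕ → ℂ}

lemma prod_Icc_one_three_mul_eq_prod_pairFactor
    (hχ : ∀ k, χ k = if k % 3 = 1 then 1 else if k % 3 = 2 then -1 else 0) (m : ℕ) (x : ℂ) :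
    ∏ k ∈ Icc 1 (3 * m), (1 + χ k / k * x) = ∏ j ∈ range m, pairFactor j x := by
  induction m with
  | zero => simp
  | succ m ih =>
    rw [show 3 * (m + 1) = 3 * m + 1 + 1 + 1 by ring, prod_Icc_succ_top (by omega),
      prod_Icc_succ_top (by omega), prod_Icc_succ_top (by omega), ih, prod_range_succ,
      hχ, hχ, hχ]
    simp only [show (3 * m + 1) % 3 = 1 by omega, show (3 * m + 1 + 1) % 3 = 2 by omega,
      show (3 * m + 1 + 1 + 1) % 3 = 0 by omega, pairFactor]
    push_cast
    ring

lemma norm_prod_Ioc_sub_one_le (hχ : ∀ k, ‖χ k‖ ≤ 1) (N : ℕ) {x : ℂ} (hx : ‖x‖ ≤ 1) :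
    ‖∏ k ∈ Ioc (3 * (N / 3)) N, (1 + χ k / k * x) - 1‖ ≤
      Real.exp (2 / ((N / 3 : ℕ) + 1)) - 1 := by
  refine (norm_prod_one_add_sub_one_le _ _).trans (sub_le_sub_right (Real.exp_le_exp.mpr ?_) 1)
  have hterm : ∀ k ∈ Ioc (3 * (N / 3)) N, ‖χ k / k * x‖ ≤ 1 / ((N / 3 : ℕ) + 1) := by
    intro k hk
    have hk : ((N / 3 : ℕ) : ℝ) + 1 ≤ k := by
      exact_mod_cast (by have := (mem_Ioc.mp hk).1; omega : N / 3 + 1 ≤ k)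
    rw [norm_mul, norm_div, Complex.norm_natCast]
    calc ‖χ k‖ / k * ‖x‖ ≤ 1 / k * 1 := by gcongr; exact hχ k
      _ ≤ 1 / ((N / 3 : ℕ) + 1) := by rw [mul_one]; gcongr
  have hcard : #(Ioc (3 * (N / 3)) N) ≤ 2 := by rw [Nat.card_Ioc]; omega
  calc ∑ k ∈ Ioc (3 * (N / 3)) N, ‖χ k / k * x‖
      ≤ #(Ioc (3 * (N / 3)) N) • (1 / (((N / 3 : ℕ) : ℝ) + 1)) := sum_le_card_nsmul _ _ _ hterm
    _ ≤ 2 • (1 / (((N / 3 : ℕ) : ℝ) + 1)) := by gcongr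
    _ = 2 / ((N / 3 : ℕ) + 1) := by rw [nsmul_eq_mul]; push_cast; ring

lemma tendstoUniformlyOn_prod_Ioc (hχ : ∀ k, ‖χ k‖ ≤ 1) :
    TendstoUniformlyOn (fun N x => ∏ k ∈ Ioc (3 * (N / 3)) N, (1 + χ k / k * x)) 1 atTop
      (ball 0 1) := by
  have hbound : Tendsto (fun q : ℕ => Real.exp (2 / ((q : ℝ) + 1)) - 1) atTop (𝓝 0) := by
    have h := ((tendsto_one_div_add_atTop_nhds_zero_nat.const_mul 2).rexp).sub_const 1
    simpa [div_eq_mul_inv] using h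
  rw [Metric.tendstoUniformlyOn_iff]
  intro ε hε
  filter_upwards [(Nat.tendsto_div_const_atTop three_ne_zero).eventually
    (hbound.eventually_lt_const hε)] with N hN x hx
  rw [Pi.one_apply, dist_eq_norm, norm_sub_rev]
  exact (norm_prod_Ioc_sub_one_le hχ N (mem_ball_zero_iff.mp hx).le).trans_lt hN

theorem tendstoLocallyUniformlyOn_prod_Icc
    (hχ : ∀ k, χ k = if k % 3 = 1 then 1 else if k % 3 = 2 then -1 else 0) :
    TendstoLocallyUniformlyOn (fun N x => ∏ k ∈ Icc 1 N, (1 + χ k / k * x)) genFunModThree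
      atTop (ball 0 1) := by
  have hpair : TendstoUniformlyOn (fun N x => ∏ j ∈ range (N / 3), pairFactor j x)
      genFunModThree atTop (ball 0 1) := by
    have h := Metric.tendstoUniformlyOn_iff.mp tendstoUniformlyOn_prod_pairFactor
    exact Metric.tendstoUniformlyOn_iff.mpr fun ε hε =>
      (Nat.tendsto_div_const_atTop three_ne_zero).eventually (h ε hε)
  have hnorm : ∀ k, ‖χ k‖ ≤ 1 := fun k => by rw [hχ]; split_ifs <;> simp
  have hprod := hpair.tendstoLocallyUniformlyOn.fun_mul₀
    (tendstoUniformlyOn_prod_Ioc hnorm).tendstoLocallyUniformlyOn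
    (by unfold genFunModThree; fun_prop) continuousOn_const
  simp only [Pi.one_apply, mul_one] at hprod
  refine hprod.congr fun N x _ => ?_
  dsimp only
  have hIcc : ∀ n, Icc 1 n = Ioc 0 n := fun n => Icc_add_one_left_eq_Ioc 0 n
  rw [← prod_Icc_one_three_mul_eq_prod_pairFactor hχ, hIcc, hIcc]
  exact prod_Ioc_consecutive _ (Nat.zero_le _) (Nat.mul_div_le N 3)

theorem tendsto_multipleLPartial
    (hχ : ∀ k, χ k = if k % 3 = 1 then 1 else if k % 3 = 2 then -1 else 0) (n : ℕ) :
    Tendsto (fun N => multipleLPartial χ n N) atTop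
      (𝓝 (iteratedDeriv n genFunModThree 0 / n.factorial)) := by
  have hderiv := (tendstoLocallyUniformlyOn_prod_Icc hχ).iteratedDeriv
    (Eventually.of_forall fun N => by fun_prop) isOpen_ball n
  refine ((hderiv.tendsto_at (mem_ball_self one_pos)).div_const _).congr fun N => ?_
  have hpoly : (fun x => ∏ k ∈ Icc 1 N, (1 + χ k / k * x)) =
      fun x => (∏ k ∈ Icc 1 N, (1 + C (χ k / k) * X)).eval x := by
    ext; simp [eval_prod]
  rw [hpoly, iteratedDeriv_eval_zero, coeff_prod_one_add_C_mul_X,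
    mul_div_cancel_left₀ _ (Nat.cast_ne_zero.mpr n.factorial_ne_zero)]
  rfl

end

lemma iteratedDeriv_genFunModThree_zero (n : ℕ) :
    iteratedDeriv n genFunModThree 0 =
      (π / 3) ^ n * (iteratedDeriv n cos 0 + (√3 : ℂ)⁻¹ * iteratedDeriv n sin 0) := by
  have hG : genFunModThree = fun x => cos (π / 3 * x) + (√3 : ℂ)⁻¹ * sin (π / 3 * x) := by
    ext x; rw [genFunModThree]; ring
  rw [hG, iteratedDeriv_fun_add (by fun_prop) (by fun_prop), iteratedDeriv_const_mul_field,
    iteratedDeriv_comp_const_mul contDiff_cos, iteratedDeriv_comp_const_mul contDiff_sin]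
  simp only [mul_zero]
  ring

lemma iteratedDeriv_even_genFunModThree_zero (n : ℕ) :
    iteratedDeriv (2 * n) genFunModThree 0 = (-1) ^ n * (π / 3) ^ (2 * n) := by
  simp only [iteratedDeriv_genFunModThree_zero, iteratedDeriv_even_cos, iteratedDeriv_even_sin,
    Pi.mul_apply, Pi.pow_apply, Pi.neg_apply, Pi.one_apply, cos_zero, sin_zero, mul_one, mul_zero,
    add_zero]
  ring

lemma iteratedDeriv_odd_genFunModThree_zero (n : ℕ) :
    iteratedDeriv (2 * n + 1) genFunModThree 0 = (-1) ^ n * (π / 3) ^ (2 * n + 1) / (√3 : ℂ) := by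
  simp only [iteratedDeriv_genFunModThree_zero, iteratedDeriv_odd_cos, iteratedDeriv_odd_sin,
    Pi.mul_apply, Pi.pow_apply, Pi.neg_apply, Pi.one_apply, cos_zero, sin_zero, mul_one, mul_zero,
    zero_add]
  ring

/-- Corollary 3(a): for the nonprincipal character mod 3,
`L_{2n}(χ) = ((-1)^n/(2n)!)(π/3)^{2n}` and
`L_{2n+1}(χ) = ((-1)^n/((2n+1)!√3))(π/3)^{2n+1}`. -/
theorem multiple_L_values_mod_three (χ : ℕ → ℂ)
    (hχ : ∀ k, χ k = if k % 3 = 1 then 1 else if k % 3 = 2 then -1 else 0) :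
    (∀ n : ℕ, 1 ≤ n →
      Tendsto (fun N => multipleLPartial χ (2 * n) N) atTop
        (nhds ((-1) ^ n / (Nat.factorial (2 * n) : ℂ) * ((Real.pi : ℂ) / 3) ^ (2 * n)))) ∧
    (∀ n : ℕ,
      Tendsto (fun N => multipleLPartial χ (2 * n + 1) N) atTop
        (nhds ((-1) ^ n / ((Nat.factorial (2 * n + 1) : ℂ) * (Real.sqrt 3 : ℂ)) *
          ((Real.pi : ℂ) / 3) ^ (2 * n + 1)))) := by
  refine ⟨fun n _ => ?_, fun n => ?_⟩
  · convert tendsto_multipleLPartial hχ (2 * n) using 2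
    rw [iteratedDeriv_even_genFunModThree_zero]
    ring
  · convert tendsto_multipleLPartial hχ (2 * n + 1) using 2
    rw [iteratedDeriv_odd_genFunModThree_zero]
    ring
end

section
/- Let χ be the nonprincipal Dirichlet character modulo 4 (so χ(k) = 1 if k ≡ 1 (mod 4), χ(k) = −1 if k ≡ 3 (mod 4), χ(k) = 0 if k is even). Then for every integer n ≥ 1: L_{2n}(χ) = ((−1)^n/(2n)!)·(π/4)^{2n}, and for every integer n ≥ 0: L_{2n+1}(χ) = ((−1)^n/(2n+1)!)·(π/4)^{2n+1}. -/
/-!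
The partial sums `multipleLPartial χ n N` are the coefficients of the polynomial
`∏_{k ≤ N} (1 + z χ(k)/k)`. Grouping its factors in blocks `k = 4m+1, …, 4m+4`, the product
becomes a ratio of Euler's finite Gamma products, so by Euler's limit formula and the reflection
formula it converges, for `‖z‖ < 1`, to `sin (π(1+z)/4) / sin (π/4) = cos (πz/4) + sin (πz/4)`,
boundedly on the circle `‖z‖ = 1/2`. Cauchy's coefficient integral over that circle and dominated
convergence turn this into convergence of the coefficients to the Taylor coefficients
`(-1)^⌊n/2⌋ (π/4)^n / n!` of `cos (πz/4) + sin (πz/4)`.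
-/

open Filter Finset

open Topology Complex
open scoped Real Nat

theorem Finset.prod_one_add_mul_eq_sum_powersetCard {ι R : Type*} [CommSemiring R]
    (s : Finset ι) (x : ι → R) (z : R) :
    ∏ i ∈ s, (1 + z * x i) =
      ∑ m ∈ range (#s + 1), (∑ t ∈ powersetCard m s, ∏ i ∈ t, x i) * z ^ m := by
  rw [prod_one_add, sum_powerset]
  refine sum_congr rfl fun m _ => ?_
  rw [sum_mul]
  refine sum_congr rfl fun t ht => ?_
  rw [prod_mul_distrib, prod_const, (mem_powersetCard.1 ht).2, mul_comm]

theorem prod_one_add_mul_eq_sum_multipleLPartial (χ : ℕ → ℂ) (N : ℕ) (z : ℂ) :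
    ∏ k ∈ Icc 1 N, (1 + z * (χ k / k)) = ∑ m ∈ range (N + 1), multipleLPartial χ m N * z ^ m := by
  rw [prod_one_add_mul_eq_sum_powersetCard, Nat.card_Icc, Nat.add_sub_cancel]
  rfl

-- Cauchy's integral for the `n`-th Taylor coefficient of `f` at `0`, scaled by `r ^ n`.
noncomputable def circleCoeff (f : ℂ → ℂ) (r : ℝ) (n : ℕ) : ℂ :=
  (2 * π)⁻¹ * ∫ θ in (0)..(2 * π), f (circleMap 0 r θ) * exp (-(n * (θ * I)))

theorem circleCoeff_pow (r : ℝ) (m n : ℕ) :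
    circleCoeff (· ^ m) r n = if m = n then (r : ℂ) ^ n else 0 := by
  have integrand : ∀ θ : ℝ, circleMap 0 r θ ^ m * exp (-(n * (θ * I))) =
      r ^ m * exp ((m - n) * I * θ) := by
    intro θ
    rw [circleMap_zero, mul_pow, ← exp_nat_mul, mul_assoc, ← exp_add]
    ring_nf
  simp only [circleCoeff, integrand, intervalIntegral.integral_const_mul]
  split_ifs with hmn
  · subst hmn
    simp [field]
  · have hc : ((m : ℂ) - n) * I ≠ 0 :=
      mul_ne_zero (sub_ne_zero.2 (by exact_mod_cast hmn)) I_ne_zero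
    have hper : exp ((m - n) * I * (2 * π : ℝ)) = 1 := by
      simpa [mul_comm, mul_assoc, mul_left_comm] using exp_int_mul_two_pi_mul_I (m - n)
    rw [integral_exp_mul_complex hc, hper]
    simp

theorem circleCoeff_sum (r : ℝ) (s : Finset ℕ) (a : ℕ → ℂ) (n : ℕ) :
    circleCoeff (fun z => ∑ m ∈ s, a m * z ^ m) r n = if n ∈ s then a n * r ^ n else 0 := by
  have hint : ∀ m, IntervalIntegrable
      (fun θ : ℝ => circleMap 0 r θ ^ m * exp (-(n * (θ * I)))) MeasureTheory.volume 0 (2 * π) :=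
    fun m => by apply Continuous.intervalIntegrable; fun_prop
  have := circleCoeff_pow r
  simp only [circleCoeff] at this ⊢
  simp only [sum_mul, mul_assoc]
  rw [intervalIntegral.integral_finsetSum fun m _ => (hint m).const_mul (a m), mul_sum]
  simp only [intervalIntegral.integral_const_mul, mul_left_comm _ (a _), this, mul_ite, mul_zero,
    sum_ite_eq']

theorem tendsto_circleCoeff {ι : Type*} {l : Filter ι} [l.IsCountablyGenerated]
    {f : ι → ℂ → ℂ} {g : ℂ → ℂ} {r C : ℝ} (hr : 0 ≤ r) (hf : ∀ i, Continuous (f i))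
    (hbound : ∀ i z, ‖z‖ = r → ‖f i z‖ ≤ C)
    (hlim : ∀ z, ‖z‖ = r → Tendsto (fun i => f i z) l (𝓝 (g z))) (n : ℕ) :
    Tendsto (fun i => circleCoeff (f i) r n) l (𝓝 (circleCoeff g r n)) := by
  have hnorm : ∀ θ : ℝ, ‖circleMap 0 r θ‖ = r := fun θ => by
    rw [norm_circleMap_zero, abs_of_nonneg hr]
  have hexp : ∀ θ : ℝ, ‖exp (-(n * (θ * I)))‖ = 1 := fun θ => by
    rw [show -(n * (θ * I)) = ((-(n * θ) : ℝ) : ℂ) * I by push_cast; ring, norm_exp_ofReal_mul_I]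
  refine Tendsto.const_mul _ <|
    intervalIntegral.tendsto_integral_filter_of_dominated_convergence (fun _ => C) ?_ ?_
      intervalIntegrable_const ?_
  · exact Eventually.of_forall fun i => by
      apply Continuous.aestronglyMeasurable; have := hf i; fun_prop
  · exact Eventually.of_forall fun i => Eventually.of_forall fun θ _ => by
      rw [norm_mul, hexp, mul_one]; exact hbound i _ (hnorm θ)
  · exact Eventually.of_forall fun θ _ => (hlim _ (hnorm θ)).mul_const _

theorem circleCoeff_eq_of_hasSum {c : ℕ → ℂ} {g : ℂ → ℂ} {r : ℝ} (hr : 0 ≤ r)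
    (hg : ∀ z, ‖z‖ = r → HasSum (fun m => c m * z ^ m) (g z))
    (hc : Summable fun m => ‖c m‖ * r ^ m) (n : ℕ) :
    circleCoeff g r n = c n * r ^ n := by
  have hpartial : Tendsto (fun K => circleCoeff (fun z => ∑ m ∈ range K, c m * z ^ m) r n) atTop
      (𝓝 (circleCoeff g r n)) := by
    refine tendsto_circleCoeff hr (fun K => by fun_prop) (C := ∑' m, ‖c m‖ * r ^ m)
      (fun K z hz => ?_) (fun z hz => (hg z hz).tendsto_sum_nat) n
    calc ‖∑ m ∈ range K, c m * z ^ m‖ ≤ ∑ m ∈ range K, ‖c m‖ * r ^ m := by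
          refine (norm_sum_le _ _).trans (sum_le_sum fun m _ => ?_)
          rw [norm_mul, norm_pow, hz]
      _ ≤ ∑' m, ‖c m‖ * r ^ m := hc.sum_le_tsum _ fun m _ => by positivity
  refine tendsto_nhds_unique hpartial (tendsto_const_nhds.congr' ?_)
  filter_upwards [eventually_gt_atTop n] with K hK
  rw [circleCoeff_sum, if_pos (mem_range.2 hK)]

theorem tendsto_coeff_of_tendsto_on_sphere {a : ℕ → ℕ → ℂ} {c : ℕ → ℂ} {g : ℂ → ℂ} {r C : ℝ}
    (hr : 0 < r) (hbound : ∀ N z, ‖z‖ = r → ‖∑ m ∈ range (N + 1), a N m * z ^ m‖ ≤ C)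
    (hlim : ∀ z, ‖z‖ = r → Tendsto (fun N => ∑ m ∈ range (N + 1), a N m * z ^ m) atTop (𝓝 (g z)))
    (hg : ∀ z, ‖z‖ = r → HasSum (fun m => c m * z ^ m) (g z))
    (hc : Summable fun m => ‖c m‖ * r ^ m) (n : ℕ) :
    Tendsto (fun N => a N n) atTop (𝓝 (c n)) := by
  have hcoeff := tendsto_circleCoeff hr.le (fun N => by fun_prop) hbound hlim n
  rw [circleCoeff_eq_of_hasSum hr.le hg hc] at hcoeff
  have hrn : ((r : ℂ) ^ n) ≠ 0 := pow_ne_zero _ (by exact_mod_cast hr.ne')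
  have hscaled : Tendsto (fun N => a N n * r ^ n) atTop (𝓝 (c n * r ^ n)) := by
    refine hcoeff.congr' ?_
    filter_upwards [eventually_ge_atTop n] with N hN
    rw [circleCoeff_sum, if_pos (mem_range.2 (Nat.lt_succ_of_le hN))]
  simpa only [mul_inv_cancel_right₀ hrn] using hscaled.mul_const ((r : ℂ) ^ n)⁻¹

theorem Complex.GammaSeq_mul_GammaSeq_one_sub_eq (s : ℂ) {n : ℕ} (hn : n ≠ 0) :
    GammaSeq s n * GammaSeq (1 - s) n =
      n * n ! ^ 2 / ∏ j ∈ range (n + 1), ((s + j) * (1 - s + j)) := by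
  have hn' : (n : ℂ) ≠ 0 := Nat.cast_ne_zero.2 hn
  have hpow : (n : ℂ) ^ s * (n : ℂ) ^ (1 - s) = n := by
    rw [← cpow_add _ _ hn', add_sub_cancel, cpow_one]
  rw [GammaSeq, GammaSeq, div_mul_div_comm, prod_mul_distrib, mul_mul_mul_comm, hpow, sq]

theorem Complex.tendsto_prod_div_sin (a c : ℂ) (ha : ∀ m : ℕ, a ≠ -m) (ha' : ∀ m : ℕ, 1 - a ≠ -m) :
    Tendsto (fun M => ∏ j ∈ range M, (a + j) * (1 - a + j) / ((c + j) * (1 - c + j))) atTop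
      (𝓝 (sin (π * a) / sin (π * c))) := by
  have hGamma : Gamma a * Gamma (1 - a) ≠ 0 := mul_ne_zero (Gamma_ne_zero ha) (Gamma_ne_zero ha')
  have hpi : (π : ℂ) ≠ 0 := ofReal_ne_zero.2 Real.pi_ne_zero
  have hlim := ((GammaSeq_tendsto_Gamma c).mul (GammaSeq_tendsto_Gamma (1 - c))).div
    ((GammaSeq_tendsto_Gamma a).mul (GammaSeq_tendsto_Gamma (1 - a))) hGamma
  rw [Gamma_mul_Gamma_one_sub, Gamma_mul_Gamma_one_sub, div_div_div_cancel_left' _ _ hpi] at hlim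
  refine (tendsto_add_atTop_iff_nat 1).1 (hlim.congr' ?_)
  filter_upwards [eventually_ne_atTop 0] with M hM
  have hK : (M * M ! ^ 2 : ℂ) ≠ 0 := by simp [hM, Nat.factorial_ne_zero]
  rw [Pi.div_apply, GammaSeq_mul_GammaSeq_one_sub_eq _ hM, GammaSeq_mul_GammaSeq_one_sub_eq _ hM,
    div_div_div_cancel_left' _ _ hK, prod_div_distrib]

theorem summable_one_div_add_one_sq : Summable fun m : ℕ => 1 / ((m : ℝ) + 1) ^ 2 := by
  exact_mod_cast (summable_nat_add_iff 1).2 (Real.summable_one_div_nat_pow.2 one_lt_two)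

namespace ModFour

noncomputable def cosAddSin (z : ℂ) : ℂ := cos (π * z / 4) + sin (π * z / 4)

theorem sin_div_sin_eq_cosAddSin (z : ℂ) :
    sin (π * ((1 + z) / 4)) / sin (π * (1 / 4)) = cosAddSin z := by
  have hcs : cos (π / 4 : ℂ) = sin (π / 4) := by
    exact_mod_cast congrArg ofReal (Real.cos_pi_div_four.trans Real.sin_pi_div_four.symm)
  have hs : sin (π / 4 : ℂ) ≠ 0 := by
    have : Real.sin (π / 4) ≠ 0 := by rw [Real.sin_pi_div_four]; positivity
    exact_mod_cast this
  rw [show (π : ℂ) * ((1 + z) / 4) = π / 4 + π * z / 4 by ring,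
    show (π : ℂ) * (1 / 4) = π / 4 by ring, sin_add, hcs, cosAddSin]
  field_simp

noncomputable def cosAddSinCoeff (n : ℕ) : ℂ := (-1) ^ (n / 2) / n ! * (π / 4) ^ n

theorem hasSum_cosAddSin (z : ℂ) : HasSum (fun n => cosAddSinCoeff n * z ^ n) (cosAddSin z) := by
  refine HasSum.even_add_odd ?_ ?_
  · convert hasSum_cos (π * z / 4) using 2 with k
    rw [cosAddSinCoeff, Nat.mul_div_cancel_left k two_pos]
    ring
  · convert hasSum_sin (π * z / 4) using 2 with k
    rw [cosAddSinCoeff, show (2 * k + 1) / 2 = k by omega]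
    ring

theorem summable_norm_cosAddSinCoeff_mul_pow (r : ℝ) :
    Summable fun n => ‖cosAddSinCoeff n‖ * r ^ n := by
  convert Real.summable_pow_div_factorial (π / 4 * r) using 2 with n
  simp [cosAddSinCoeff, abs_of_pos Real.pi_pos]
  ring

noncomputable def chi4 (k : ℕ) : ℂ := if k % 4 = 1 then 1 else if k % 4 = 3 then -1 else 0

noncomputable def partialProd (N : ℕ) (z : ℂ) : ℂ := ∏ k ∈ Icc 1 N, (1 + z * (chi4 k / k))

noncomputable def blockProd (M : ℕ) (z : ℂ) : ℂ :=
  ∏ m ∈ range M, (1 + z / (4 * m + 1)) * (1 - z / (4 * m + 3))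

-- What `partialProd N` has beyond its complete blocks of four; nothing for `N = 4M + 3`,
-- since `chi4 (4M + 4) = 0`.
noncomputable def tailFactor (N : ℕ) (z : ℂ) : ℂ :=
  if N % 4 = 1 ∨ N % 4 = 2 then 1 + z / (4 * (N / 4 : ℕ) + 1) else 1

theorem partialProd_succ (N : ℕ) (z : ℂ) :
    partialProd (N + 1) z = partialProd N z * (1 + z * (chi4 (N + 1) / (N + 1 : ℕ))) := by
  rw [partialProd, partialProd, prod_Icc_succ_top (by omega)]

theorem partialProd_four_mul (M : ℕ) (z : ℂ) : partialProd (4 * M) z = blockProd M z := by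
  induction M with
  | zero => simp [partialProd, blockProd]
  | succ M ih =>
    rw [show 4 * (M + 1) = 4 * M + 1 + 1 + 1 + 1 by ring, partialProd_succ, partialProd_succ,
      partialProd_succ, partialProd_succ, ih, blockProd, blockProd, prod_range_succ]
    simp [chi4, Nat.add_mod]
    ring

theorem partialProd_eq_blockProd_mul_tailFactor (N : ℕ) (z : ℂ) :
    partialProd N z = blockProd ((N + 1) / 4) z * tailFactor N z := by
  obtain ⟨M, j, hj, rfl⟩ : ∃ M j, j < 4 ∧ N = 4 * M + j :=
    ⟨N / 4, N % 4, N.mod_lt (by norm_num), (N.div_add_mod 4).symm⟩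
  interval_cases j
  · rw [show (4 * M + 0 + 1) / 4 = M by omega]
    simp [partialProd_four_mul, tailFactor]
  · rw [show (4 * M + 1 + 1) / 4 = M by omega]
    simp [partialProd_succ, partialProd_four_mul, tailFactor, chi4, Nat.add_mod,
      show (4 * M + 1) / 4 = M by omega, div_eq_mul_inv]
  · rw [show (4 * M + 2 + 1) / 4 = M by omega]
    simp [partialProd_succ, partialProd_four_mul, tailFactor, chi4, Nat.add_mod,
      show (4 * M + 2) / 4 = M by omega, div_eq_mul_inv]
  · rw [show (4 * M + 3 + 1) / 4 = M + 1 by omega]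
    simp [partialProd_succ, partialProd_four_mul, tailFactor, chi4, Nat.add_mod, blockProd,
      prod_range_succ]
    ring

theorem norm_tailFactor_sub_one_le (N : ℕ) (z : ℂ) :
    ‖tailFactor N z - 1‖ ≤ ‖z‖ / (N / 4 + 1 : ℕ) := by
  unfold tailFactor
  split_ifs
  · have hden : (4 * (N / 4 : ℕ) + 1 : ℂ) = (4 * (N / 4) + 1 : ℕ) := by push_cast; ring
    rw [add_sub_cancel_left, norm_div, hden, norm_natCast]
    gcongr
    omega
  · simp only [sub_self, norm_zero]
    positivity

theorem norm_tailFactor_le (N : ℕ) (z : ℂ) : ‖tailFactor N z‖ ≤ 1 + ‖z‖ := by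
  have h : ‖z‖ / (N / 4 + 1 : ℕ) ≤ ‖z‖ :=
    div_le_self (norm_nonneg z) (by exact_mod_cast Nat.succ_pos _)
  have := norm_sub_norm_le (tailFactor N z) 1
  linarith [norm_tailFactor_sub_one_le N z, norm_one (α := ℂ)]

theorem tendsto_tailFactor (z : ℂ) : Tendsto (fun N => tailFactor N z) atTop (𝓝 1) := by
  have hdiv : Tendsto (fun N : ℕ => N / 4 + 1) atTop atTop :=
    tendsto_atTop_atTop.2 fun b => ⟨4 * b, fun N hN => by omega⟩
  rw [tendsto_iff_norm_sub_tendsto_zero]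
  exact squeeze_zero (fun N => norm_nonneg _) (fun N => norm_tailFactor_sub_one_le N z)
    ((tendsto_const_div_atTop_nhds_zero_nat ‖z‖).comp hdiv)

theorem blockFactor_eq (z : ℂ) (m : ℕ) :
    (1 + z / (4 * m + 1)) * (1 - z / (4 * m + 3)) =
      ((1 + z) / 4 + m) * (1 - (1 + z) / 4 + m) / ((1 / 4 + m) * (1 - 1 / 4 + m)) := by
  have h1 : (4 * m + 1 : ℂ) ≠ 0 := by exact_mod_cast (4 * m).succ_ne_zero
  have h3 : (4 * m + 3 : ℂ) ≠ 0 := by exact_mod_cast (4 * m + 2).succ_ne_zero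
  have h1' : (1 / 4 + m : ℂ) ≠ 0 := fun h => h1 (by linear_combination 4 * h)
  have h3' : (1 - 1 / 4 + m : ℂ) ≠ 0 := fun h => h3 (by linear_combination 4 * h)
  rw [eq_div_iff (mul_ne_zero h1' h3')]
  field_simp
  ring

theorem tendsto_blockProd {z : ℂ} (hz : ‖z‖ < 1) :
    Tendsto (fun M => blockProd M z) atTop (𝓝 (cosAddSin z)) := by
  have hre := abs_lt.1 ((abs_re_le_norm z).trans_lt hz)
  have ha : ∀ m : ℕ, (1 + z) / 4 ≠ -m := fun m h => by
    have := congrArg re h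
    simp at this
    linarith [m.cast_nonneg (α := ℝ)]
  have ha' : ∀ m : ℕ, 1 - (1 + z) / 4 ≠ -m := fun m h => by
    have := congrArg re h
    simp at this
    linarith [m.cast_nonneg (α := ℝ)]
  have := tendsto_prod_div_sin ((1 + z) / 4) (1 / 4) ha ha'
  rw [sin_div_sin_eq_cosAddSin] at this
  simpa only [blockProd, blockFactor_eq] using this

theorem norm_blockFactor_le {z : ℂ} (hz : ‖z‖ ≤ 1 / 2) (m : ℕ) :
    ‖(1 + z / (4 * m + 1)) * (1 - z / (4 * m + 3))‖ ≤ 1 + 1 / ((m : ℝ) + 1) ^ 2 := by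
  have h1 : (4 * m + 1 : ℂ) ≠ 0 := by exact_mod_cast (4 * m).succ_ne_zero
  have h3 : (4 * m + 3 : ℂ) ≠ 0 := by exact_mod_cast (4 * m + 2).succ_ne_zero
  have hfactor : (1 + z / (4 * m + 1)) * (1 - z / (4 * m + 3)) =
      1 + z * (2 - z) / ((4 * m + 1) * (4 * m + 3) : ℕ) := by
    push_cast
    field_simp
    ring
  have hnum : ‖z * (2 - z)‖ ≤ 5 / 4 := by
    rw [norm_mul]
    have : ‖2 - z‖ ≤ 2 + ‖z‖ := (norm_sub_le _ _).trans (by norm_num)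
    nlinarith [norm_nonneg z, norm_nonneg (2 - z)]
  have hden : (5 / 4 : ℝ) / ((4 * m + 1) * (4 * m + 3) : ℕ) ≤ 1 / ((m : ℝ) + 1) ^ 2 := by
    push_cast
    rw [div_le_div_iff₀ (by positivity) (by positivity)]
    nlinarith [m.cast_nonneg (α := ℝ)]
  rw [hfactor]
  refine (norm_add_le _ _).trans ?_
  rw [norm_one, norm_div, norm_natCast]
  linarith [(div_le_div_of_nonneg_right hnum (by positivity)).trans hden]

theorem norm_blockProd_le {z : ℂ} (hz : ‖z‖ ≤ 1 / 2) (M : ℕ) :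
    ‖blockProd M z‖ ≤ Real.exp (∑' m : ℕ, 1 / ((m : ℝ) + 1) ^ 2) := by
  rw [blockProd, norm_prod]
  calc _ ≤ ∏ m ∈ range M, (1 + 1 / ((m : ℝ) + 1) ^ 2) :=
        prod_le_prod (fun m _ => norm_nonneg _) fun m _ => norm_blockFactor_le hz m
    _ ≤ Real.exp (∑ m ∈ range M, 1 / ((m : ℝ) + 1) ^ 2) :=
        Real.prod_one_add_le_exp_sum _ fun m => by positivity
    _ ≤ _ := Real.exp_le_exp.2 <|
        summable_one_div_add_one_sq.sum_le_tsum _ fun m _ => by positivity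

theorem norm_partialProd_le {z : ℂ} (hz : ‖z‖ ≤ 1 / 2) (N : ℕ) :
    ‖partialProd N z‖ ≤ Real.exp (∑' m : ℕ, 1 / ((m : ℝ) + 1) ^ 2) * (3 / 2) := by
  rw [partialProd_eq_blockProd_mul_tailFactor, norm_mul]
  exact mul_le_mul (norm_blockProd_le hz _) ((norm_tailFactor_le N z).trans (by linarith))
    (norm_nonneg _) (Real.exp_pos _).le

theorem tendsto_partialProd {z : ℂ} (hz : ‖z‖ < 1) :
    Tendsto (fun N => partialProd N z) atTop (𝓝 (cosAddSin z)) := by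
  have hdiv : Tendsto (fun N : ℕ => (N + 1) / 4) atTop atTop :=
    tendsto_atTop_atTop.2 fun b => ⟨4 * b, fun N hN => by omega⟩
  simpa only [partialProd_eq_blockProd_mul_tailFactor, Function.comp_apply, mul_one] using
    ((tendsto_blockProd hz).comp hdiv).mul (tendsto_tailFactor z)

theorem partialProd_eq_sum (N : ℕ) (z : ℂ) :
    partialProd N z = ∑ m ∈ range (N + 1), multipleLPartial chi4 m N * z ^ m :=
  prod_one_add_mul_eq_sum_multipleLPartial chi4 N z

theorem tendsto_multipleLPartial_chi4 (n : ℕ) :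
    Tendsto (fun N => multipleLPartial chi4 n N) atTop (𝓝 (cosAddSinCoeff n)) :=
  tendsto_coeff_of_tendsto_on_sphere one_half_pos
    (fun N z hz => partialProd_eq_sum N z ▸ norm_partialProd_le hz.le N)
    (fun z hz => by
      simpa only [partialProd_eq_sum] using tendsto_partialProd (by rw [hz]; norm_num))
    (fun z _ => hasSum_cosAddSin z) (summable_norm_cosAddSinCoeff_mul_pow _) n

end ModFour

/-- Corollary 3(b): for the nonprincipal character mod 4,
`L_{2n}(χ) = ((-1)^n/(2n)!)(π/4)^{2n}` and
`L_{2n+1}(χ) = ((-1)^n/(2n+1)!)(π/4)^{2n+1}`. -/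
theorem multiple_L_values_mod_four (χ : ℕ → ℂ)
    (hχ : ∀ k, χ k = if k % 4 = 1 then 1 else if k % 4 = 3 then -1 else 0) :
    (∀ n : ℕ, 1 ≤ n →
      Tendsto (fun N => multipleLPartial χ (2 * n) N) atTop
        (nhds ((-1) ^ n / (Nat.factorial (2 * n) : ℂ) * ((Real.pi : ℂ) / 4) ^ (2 * n)))) ∧
    (∀ n : ℕ,
      Tendsto (fun N => multipleLPartial χ (2 * n + 1) N) atTop
        (nhds ((-1) ^ n / ((Nat.factorial (2 * n + 1) : ℂ)) *
          ((Real.pi : ℂ) / 4) ^ (2 * n + 1)))) := by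
  obtain rfl : χ = ModFour.chi4 := funext hχ
  refine ⟨fun n _ => ?_, fun n => ?_⟩
  · simpa [ModFour.cosAddSinCoeff, Nat.mul_div_cancel_left n two_pos] using
      ModFour.tendsto_multipleLPartial_chi4 (2 * n)
  · simpa [ModFour.cosAddSinCoeff, show (2 * n + 1) / 2 = n by omega] using
      ModFour.tendsto_multipleLPartial_chi4 (2 * n + 1)
end
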